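/- arXiv:2202.07582 — 7 statements merged into one kernel-verified Lean document; each statement's English description precedes it below -/
import Mathlib

section
/- If (Y,t) is a tree decomposition of a graph G and Γ = (G,X) is a graph with sources such that X ⊆ t(r) for some vertex r of Y, then there exists a recursive tree decomposition T of Γ with width equal to the width of (Y,t), where the width of a tree decomposition is the maximum cardinality of a bag and the width of a recursive tree decomposition (T₁,V',T₂) is max{|V'|, width(T₁), width(T₂)} with width() = 0. -/
open CategoryTheory MonoidalCategory

namespace MWidth

section


variable {V E : Type}

/-- every edge has one or two endpoints -/
def EndsSmall (ends : E → Set V) : Prop := ∀ e, ∃ u w : V, ends e = {u, w}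

/-! ### Tree decompositions (Robertson–Seymour style) -/

structure TreeDec (ends : E → Set V) (ι : Type) where
  Y : SimpleGraph ι
  conn : Y.Connected
  acyc : Y.IsAcyclic
  t : ι → Set V
  cover : ∀ v : V, ∃ i, v ∈ t i
  edge : ∀ e : E, ∃ i, ends e ⊆ t i
  sep : ∀ ⦃i j k : ι⦄ (p : Y.Walk i k), p.IsPath → j ∈ p.support → t i ∩ t k ⊆ t j

noncomputable def TreeDec.width {ends : E → Set V} {ι : Type} (D : TreeDec ends ι) : ℕ :=
  ⨆ i, (D.t i).ncard

/-! ### Recursive tree decompositions -/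

inductive RTree (V : Type) where
  | nil : RTree V
  | node : RTree V → Set V → RTree V → RTree V

namespace RTree

noncomputable def width : RTree V → ℕ
  | nil => 0
  | node T1 W T2 => max W.ncard (max T1.width T2.width)

def label : RTree V → Set V
  | nil => ∅
  | node _ W _ => W

inductive Subtree : RTree V → RTree V → Prop
  | refl (T : RTree V) : Subtree T T
  | left {T' T1 T2 : RTree V} {W : Set V} : Subtree T' T1 → Subtree T' (node T1 W T2)
  | right {T' T1 T2 : RTree V} {W : Set V} : Subtree T' T2 → Subtree T' (node T1 W T2)

end RTree

/-- `IsRTD ends vs es X T` : `T` is a recursive tree decomposition of the graph with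
sources `((vs,es),X)` living inside the ambient graph `(V,E,ends)`. -/
def IsRTD (ends : E → Set V) : Set V → Set E → Set V → RTree V → Prop
  | vs, es, _, .nil => vs = ∅ ∧ es = ∅
  | vs, es, X, .node T1 W T2 =>
      W.Nonempty ∧ W ⊆ vs ∧ X ⊆ W ∧
      ∃ (vs1 vs2 : Set V) (es1 es2 : Set E),
        vs1 ⊆ vs ∧ vs2 ⊆ vs ∧ es1 ⊆ es ∧ es2 ⊆ es ∧
        (∀ e ∈ es1, ends e ⊆ vs1) ∧ (∀ e ∈ es2, ends e ⊆ vs2) ∧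
        W ∪ vs1 ∪ vs2 = vs ∧ es1 ∩ es2 = ∅ ∧ vs1 ∩ vs2 ⊆ W ∧
        (∀ e ∈ es \ (es1 ∪ es2), ends e ⊆ W) ∧
        IsRTD ends vs1 es1 (vs1 ∩ W) T1 ∧ IsRTD ends vs2 es2 (vs2 ∩ W) T2

/-! ### Path decompositions -/

def IsPathDec (ends : E → Set V) (L : List (Set V)) : Prop :=
  (∀ v : V, ∃ W ∈ L, v ∈ W) ∧ (∀ e : E, ∃ W ∈ L, ends e ⊆ W) ∧
    ∀ i j k : ℕ, i ≤ j → j ≤ k → k < L.length →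
      L.getD i ∅ ∩ L.getD k ∅ ⊆ L.getD j ∅

/-- width of a list of bags (used both for path decompositions and recursive
path decompositions) -/
noncomputable def pdWidth : List (Set V) → ℕ
  | [] => 0
  | W :: L => max W.ncard (pdWidth L)

/-- `IsRPD ends vs es X L` : `L` is a recursive path decomposition of `((vs,es),X)`. -/
def IsRPD (ends : E → Set V) : Set V → Set E → Set V → List (Set V) → Prop
  | vs, es, _, [] => vs = ∅ ∧ es = ∅
  | vs, es, X, V1 :: L =>
      V1.Nonempty ∧ V1 ⊆ vs ∧ X ⊆ V1 ∧
      ∃ (vs' : Set V) (es' : Set E),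
        vs' ⊆ vs ∧ es' ⊆ es ∧ (∀ e ∈ es', ends e ⊆ vs') ∧
        V1 ∪ vs' = vs ∧ (∀ e ∈ es \ es', ends e ⊆ V1) ∧
        IsRPD ends vs' es' (V1 ∩ vs') L

/-! ### Branch decompositions -/

/-- binary trees whose nodes are labelled by subgraphs-with-sources `(vs,es,X)` -/
inductive BT (V E : Type) where
  | nil : BT V E
  | leaf : Set V → Set E → Set V → BT V E
  | node : BT V E → Set V → Set E → Set V → BT V E → BT V E

namespace BT

noncomputable def width : BT V E → ℕ
  | nil => 0
  | leaf _ _ X => X.ncard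
  | node T1 _ _ X T2 => max X.ncard (max T1.width T2.width)

def labelV : BT V E → Set V
  | nil => ∅
  | leaf vs _ _ => vs
  | node _ vs _ _ _ => vs

def labelX : BT V E → Set V
  | nil => ∅
  | leaf _ _ X => X
  | node _ _ _ X _ => X

inductive Subtree : BT V E → BT V E → Prop
  | refl (T : BT V E) : Subtree T T
  | left {T' T1 T2 : BT V E} {vs X : Set V} {es : Set E} :
      Subtree T' T1 → Subtree T' (node T1 vs es X T2)
  | right {T' T1 T2 : BT V E} {vs X : Set V} {es : Set E} :
      Subtree T' T2 → Subtree T' (node T1 vs es X T2)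

end BT

/-- `IsRBD ends vs es X T` : `T` is a recursive branch decomposition of `((vs,es),X)`. -/
def IsRBD (ends : E → Set V) : Set V → Set E → Set V → BT V E → Prop
  | _, es, _, .nil => es = ∅
  | vs, es, X, .leaf vs' es' X' => vs' = vs ∧ es' = es ∧ X' = X ∧ ∃ e, es = {e}
  | vs, es, X, .node T1 vs' es' X' T2 =>
      vs' = vs ∧ es' = es ∧ X' = X ∧
      ∃ (vs1 vs2 : Set V) (es1 es2 : Set E),
        vs1 ⊆ vs ∧ vs2 ⊆ vs ∧
        (∀ e ∈ es1, ends e ⊆ vs1) ∧ (∀ e ∈ es2, ends e ⊆ vs2) ∧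
        es1 ∪ es2 = es ∧ es1 ∩ es2 = ∅ ∧ vs1 ∪ vs2 = vs ∧
        IsRBD ends vs1 es1 ((vs1 ∩ vs2) ∪ (X ∩ vs1)) T1 ∧
        IsRBD ends vs2 es2 ((vs1 ∩ vs2) ∪ (X ∩ vs2)) T2

/-- branch decompositions: subcubic trees with leaves in bijection with the edges -/
structure BranchDec (E ι : Type) where
  Y : SimpleGraph ι
  conn : Y.Connected
  acyc : Y.IsAcyclic
  subcubic : ∀ i : ι, (Y.neighborSet i).ncard ≤ 3
  b : {i : ι // (Y.neighborSet i).ncard = 1} ≃ E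

/-- the edges of `G` on the `u`-side of the edge `{u,w}` of the decomposition tree -/
def BranchDec.side {E ι : Type} (D : BranchDec E ι) (u w : ι) : Set E :=
  { e | ∃ l : {i : ι // (D.Y.neighborSet i).ncard = 1},
      (D.Y.deleteEdges {s(u, w)}).Reachable u l.1 ∧ D.b l = e }

def edgeEnds (ends : E → Set V) (A : Set E) : Set V := ⋃ e ∈ A, ends e

noncomputable def BranchDec.order (ends : E → Set V) {ι : Type} (D : BranchDec E ι)
    (u w : ι) : ℕ :=
  (edgeEnds ends (D.side u w) ∩ edgeEnds ends (D.side w u)).ncard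

noncomputable def BranchDec.bwidth (ends : E → Set V) {ι : Type} (D : BranchDec E ι) : ℕ :=
  ⨆ p : {p : ι × ι // D.Y.Adj p.1 p.2}, D.order ends p.1.1 p.1.2

/-! ### min-max widths -/

noncomputable def treewidth (ends : E → Set V) : ℕ :=
  sInf { n | ∃ (ι : Type) (_ : Finite ι) (D : TreeDec ends ι), D.width = n }

noncomputable def pathwidth (ends : E → Set V) : ℕ :=
  sInf { n | ∃ L : List (Set V), IsPathDec ends L ∧ pdWidth L = n }

noncomputable def branchwidth (ends : E → Set V) : ℕ :=
  sInf { n | ∃ (ι : Type) (_ : Fintype ι) (D : BranchDec E ι), D.bwidth ends = n }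

end

set_option linter.unusedSectionVars false

section Aux
variable {V E ι : Type}

def Avoid (Y : SimpleGraph ι) (i a b : ι) : Prop := ∃ w : Y.Walk a b, i ∉ w.support

def PathClosed (Y : SimpleGraph ι) (i : ι) (S : Set ι) : Prop :=
  i ∈ S ∧ ∀ k ∈ S, ∀ p : Y.Walk i k, p.IsPath → ∀ m ∈ p.support, m ∈ S

def cmp (Y : SimpleGraph ι) (i c : ι) (S : Set ι) : Set ι :=
  {k | k ∈ S ∧ k ≠ i ∧ Avoid Y i c k}

def vsS (t : ι → Set V) (S : Set ι) : Set V := ⋃ j ∈ S, t j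

def esS (f : E → ι) (S : Set ι) : Set E := {e | f e ∈ S}

open Classical in
noncomputable def FF (Y : SimpleGraph ι) (t : ι → Set V) : ℕ → ι → Set ι → RTree V
  | 0, _, _ => .nil
  | (n+1), i, S =>
    if vsS t S = ∅ then .nil
    else if t i = ∅ then
      (if hj : ∃ j, j ∈ S ∧ (t j).Nonempty then FF Y t n hj.choose S else .nil)
    else if hc : ∃ c j, j ∈ S ∧ j ≠ i ∧ Y.Adj i c ∧ Avoid Y i c j then
      .node (FF Y t n hc.choose (cmp Y i hc.choose S)) (t i)
            (FF Y t n i (S \ cmp Y i hc.choose S))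
    else
      .node .nil (t i) .nil

lemma vsS_mono {t : ι → Set V} {S S' : Set ι} (h : S ⊆ S') : vsS t S ⊆ vsS t S' :=
  Set.biUnion_subset_biUnion_left h

lemma subset_vsS {t : ι → Set V} {S : Set ι} {j : ι} (hj : j ∈ S) : t j ⊆ vsS t S :=
  Set.subset_biUnion_of_mem hj

lemma vsS_union {t : ι → Set V} (A B : Set ι) : vsS t (A ∪ B) = vsS t A ∪ vsS t B :=
  Set.biUnion_union A B t

lemma vsS_singleton {t : ι → Set V} (i : ι) : vsS t {i} = t i := by simp [vsS]

lemma mem_vsS_iff {t : ι → Set V} {S : Set ι} {v : V} :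
    v ∈ vsS t S ↔ ∃ j ∈ S, v ∈ t j := by simp [vsS]

end Aux

section Help
variable {ι : Type} [DecidableEq ι] {Y : SimpleGraph ι}

open SimpleGraph Walk

lemma avoid_toPath {i c k : ι} (h : Avoid Y i c k) :
    ∃ q : Y.Walk c k, q.IsPath ∧ i ∉ q.support := by
  obtain ⟨w, hw⟩ := h
  exact ⟨w.toPath, (w.toPath : Y.Path c k).2, fun h => hw (Walk.support_toPath_subset _ h)⟩

lemma exists_adj_avoid {i j : ι} (hij : i ≠ j) (hr : Y.Reachable i j) :
    ∃ c, Y.Adj i c ∧ Avoid Y i c j := by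
  obtain ⟨w⟩ := hr
  obtain ⟨q, hq⟩ := (w.toPath : Y.Path i j)
  cases q with
  | nil => exact absurd rfl hij
  | cons h r => exact ⟨_, h, ⟨r, ((Walk.cons_isPath_iff h r).1 hq).2⟩⟩

lemma reroot (acy : Y.IsAcyclic) (con : Y.Connected) {i j : ι} {S : Set ι}
    (h : PathClosed Y i S) (hj : j ∈ S) : PathClosed Y j S := by
  refine ⟨hj, fun k hk p hp m hm => ?_⟩
  obtain ⟨p1, hp1⟩ := ((con.preconnected i j).some.toPath : Y.Path i j)
  obtain ⟨p2, hp2⟩ := ((con.preconnected i k).some.toPath : Y.Path i k)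
  have hq : (⟨p, hp⟩ : Y.Path j k) = (p1.reverse.append p2).toPath :=
    acy.path_unique _ _
  have hm1 : m ∈ ((p1.reverse.append p2).toPath : Y.Walk j k).support := by
    rw [← hq]; exact hm
  have hm2 : m ∈ (p1.reverse.append p2).support :=
    Walk.support_toPath_subset _ hm1
  rw [Walk.support_append] at hm2
  rcases List.mem_append.1 hm2 with h1 | h2
  · rw [Walk.support_reverse] at h1
    exact h.2 j hj p1 hp1 m (List.mem_reverse.1 h1)
  · exact h.2 k hk p2 hp2 m (List.mem_of_mem_tail h2)

lemma mem_of_avoid {i c k : ι} {S : Set ι} (h : PathClosed Y i S)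
    (hadj : Y.Adj i c) (hkS : k ∈ S) (hav : Avoid Y i c k) : c ∈ S := by
  obtain ⟨q, hq, hiq⟩ := avoid_toPath hav
  exact h.2 k hkS (Walk.cons hadj q) (hq.cons hiq) c
    (by rw [Walk.support_cons]; exact List.mem_cons_of_mem _ q.start_mem_support)

lemma c_mem_cmp {i c : ι} {S : Set ι} (hcS : c ∈ S) (hadj : Y.Adj i c) :
    c ∈ cmp Y i c S :=
  ⟨hcS, hadj.ne', ⟨SimpleGraph.Walk.nil, by simp [hadj.ne]⟩⟩

lemma closed_cmp (acy : Y.IsAcyclic) {i c : ι} {S : Set ι}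
    (h : PathClosed Y i S) (hadj : Y.Adj i c) (hcS : c ∈ S) :
    PathClosed Y c (cmp Y i c S) := by
  refine ⟨c_mem_cmp hcS hadj, fun k hk p hp m hm => ?_⟩
  obtain ⟨hkS, hki, hav⟩ := hk
  obtain ⟨q, hq, hiq⟩ := avoid_toPath hav
  have huniq : (⟨p, hp⟩ : Y.Path c k) = ⟨q, hq⟩ := acy.path_unique _ _
  have hip : i ∉ p.support := by
    intro hip; apply hiq
    have : p = q := congrArg Subtype.val huniq
    rwa [this] at hip
  have hmS : m ∈ S := h.2 k hkS (Walk.cons hadj p) (hp.cons hip) m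
    (by rw [Walk.support_cons]; exact List.mem_cons_of_mem _ hm)
  exact ⟨hmS, fun hmi => hip (hmi ▸ hm),
    ⟨p.takeUntil m hm, fun hh => hip (Walk.support_takeUntil_subset _ _ hh)⟩⟩

lemma closed_sdiff {i c : ι} {S : Set ι}
    (h : PathClosed Y i S) (hadj : Y.Adj i c) :
    PathClosed Y i (S \ cmp Y i c S) := by
  refine ⟨⟨h.1, fun hi => hi.2.1 rfl⟩, fun k hk p hp m hm => ?_⟩
  have hmS : m ∈ S := h.2 k hk.1 p hp m hm
  refine ⟨hmS, fun hmC => ?_⟩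
  obtain ⟨_, hmi, w, hw⟩ := hmC
  have hsupp : p.support = (p.takeUntil m hm).support ++ (p.dropUntil m hm).support.tail := by
    rw [← Walk.support_append, Walk.take_spec]
  have hnd := hp.2
  rw [hsupp] at hnd
  have hitail : i ∉ (p.dropUntil m hm).support.tail :=
    List.disjoint_of_nodup_append hnd (p.takeUntil m hm).start_mem_support
  have hidrop : i ∉ (p.dropUntil m hm).support := by
    rw [Walk.support_eq_cons]
    intro hh
    rcases List.mem_cons.1 hh with h1 | h2
    · exact hmi h1.symm
    · exact hitail h2
  have hkC : k ∈ cmp Y i c S := by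
    refine ⟨hk.1, fun hki => hidrop (hki ▸ (p.dropUntil m hm).end_mem_support), ?_⟩
    refine ⟨w.append (p.dropUntil m hm), ?_⟩
    rw [Walk.support_append]
    rintro hh
    rcases List.mem_append.1 hh with h1 | h2
    · exact hw h1
    · exact hitail h2
  exact hk.2 hkC

variable {VV : Type} {t : ι → Set VV}

lemma sep_child
    (sep : ∀ ⦃a b d : ι⦄ (p : Y.Walk a d), p.IsPath → b ∈ p.support → t a ∩ t d ⊆ t b)
    {i c k : ι} (hadj : Y.Adj i c) (hav : Avoid Y i c k) :
    t i ∩ t k ⊆ t c := by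
  obtain ⟨q, hq, hiq⟩ := avoid_toPath hav
  exact sep (Walk.cons hadj q) (hq.cons hiq)
    (by rw [Walk.support_cons]; exact List.mem_cons_of_mem _ q.start_mem_support)

lemma sep_cross (con : Y.Connected)
    (sep : ∀ ⦃a b d : ι⦄ (p : Y.Walk a d), p.IsPath → b ∈ p.support → t a ∩ t d ⊆ t b)
    {i c k k' : ι} {S : Set ι} (hk : k ∈ cmp Y i c S) (hk' : k' ∈ S \ cmp Y i c S) :
    t k ∩ t k' ⊆ t i := by
  intro v hv
  by_cases hk'i : k' = i
  · exact hk'i ▸ hv.2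
  obtain ⟨hkS, hki, w, hw⟩ := hk
  obtain ⟨p, hp⟩ := ((con.preconnected k k').some.toPath : Y.Path k k')
  by_cases hip : i ∈ p.support
  · exact sep p hp hip hv
  exfalso
  apply hk'.2
  refine ⟨hk'.1, hk'i, ⟨w.append p, ?_⟩⟩
  rw [Walk.support_append]
  rintro hh
  rcases List.mem_append.1 hh with h1 | h2
  · exact hw h1
  · exact hip (List.mem_of_mem_tail h2)

end Help

section Main
variable {V E ι : Type} [Finite ι]

open Classical in
lemma main_rtd [DecidableEq ι] {ends : E → Set V} {Y : SimpleGraph ι} {t : ι → Set V} {f : E → ι}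
    (hsmall : EndsSmall ends)
    (acy : Y.IsAcyclic) (con : Y.Connected)
    (sep : ∀ ⦃a b d : ι⦄ (p : Y.Walk a d), p.IsPath → b ∈ p.support → t a ∩ t d ⊆ t b)
    (hf : ∀ e, ends e ⊆ t (f e)) :
    ∀ (n : ℕ) (i : ι) (S : Set ι) (X' : Set V), PathClosed Y i S → X' ⊆ t i →
      2 * S.ncard + (if t i = ∅ then 1 else 0) ≤ n →
      IsRTD ends (vsS t S) (esS f S) X' (FF Y t n i S) ∧
      (∀ i' ∈ S, (t i').ncard ≤ (FF Y t n i S).width) ∧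
      (FF Y t n i S).width ≤ ⨆ i', (t i').ncard := by
  have hbdd : BddAbove (Set.range fun i' : ι => (t i').ncard) :=
    Set.Finite.bddAbove (Set.finite_range _)
  intro n
  induction n with
  | zero =>
    intro i S X' hcl hX hfuel
    exfalso
    have h1 : 0 < S.ncard := (Set.ncard_pos S.toFinite).2 ⟨i, hcl.1⟩
    set fl := (if t i = ∅ then (1:ℕ) else 0) with hfl
    omega
  | succ n ih =>
    intro i S X' hcl hX hfuel
    rw [FF]
    by_cases hvs : vsS t S = ∅
    · rw [if_pos hvs]
      have hes : esS f S = ∅ := by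
        apply Set.eq_empty_iff_forall_notMem.2
        intro e he
        have heS : f e ∈ S := he
        obtain ⟨u, w, hew⟩ := hsmall e
        have hu : u ∈ vsS t S := (subset_vsS heS) (hf e (by rw [hew]; exact Set.mem_insert u {w}))
        rw [hvs] at hu
        exact hu
      refine ⟨⟨hvs, hes⟩, fun i' hi' => ?_, ?_⟩
      · have : t i' = ∅ := Set.subset_empty_iff.1 ((subset_vsS hi').trans hvs.subset)
        simp [this]
      · simp [RTree.width]
    rw [if_neg hvs]
    by_cases hti : t i = ∅
    · rw [if_pos hti]
      have hex : ∃ j, j ∈ S ∧ (t j).Nonempty := by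
        obtain ⟨v, hv⟩ := Set.nonempty_iff_ne_empty.2 hvs
        obtain ⟨j, hjS, hvj⟩ := mem_vsS_iff.1 hv
        exact ⟨j, hjS, ⟨v, hvj⟩⟩
      rw [dif_pos hex]
      obtain ⟨hjS, hjne⟩ := hex.choose_spec
      apply ih hex.choose S X' (reroot acy con hcl hjS)
        (fun v hv => absurd (hX hv) (by rw [hti]; exact Set.notMem_empty v))
      rw [if_neg (Set.nonempty_iff_ne_empty.1 hjne)]
      rw [if_pos hti] at hfuel
      omega
    rw [if_neg hti]
    rw [if_neg hti] at hfuel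
    by_cases hc : ∃ c j, j ∈ S ∧ j ≠ i ∧ Y.Adj i c ∧ Avoid Y i c j
    · rw [dif_pos hc]
      obtain ⟨j, hjS, hji, hadj, hav⟩ := hc.choose_spec
      set c := hc.choose with hcdef
      set C := cmp Y i c S with hCdef
      have hCsub : C ⊆ S := fun k hk => hk.1
      have hiC : i ∉ C := fun h => h.2.1 rfl
      have hcS : c ∈ S := mem_of_avoid hcl hadj hjS hav
      have hcC : c ∈ C := c_mem_cmp hcS hadj
      have hjC : j ∈ C := ⟨hjS, hji, hav⟩
      -- cardinalities
      have hC1 : C.ncard + 1 ≤ S.ncard := by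
        have h1 : C ⊆ S \ {i} := fun k hk => ⟨hk.1, hk.2.1⟩
        have h2 : C.ncard ≤ (S \ {i}).ncard := Set.ncard_le_ncard h1 (S \ {i}).toFinite
        have h3 : (S \ {i}).ncard + 1 = S.ncard := Set.ncard_diff_singleton_add_one hcl.1 S.toFinite
        omega
      have hD1 : (S \ C).ncard + 1 ≤ S.ncard := by
        have h1 : S \ C ⊆ S \ {c} := fun k hk => ⟨hk.1, fun h => hk.2 (h ▸ hcC)⟩
        have h2 : (S \ C).ncard ≤ (S \ {c}).ncard := Set.ncard_le_ncard h1 (S \ {c}).toFinite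
        have h3 : (S \ {c}).ncard + 1 = S.ncard := Set.ncard_diff_singleton_add_one hcS S.toFinite
        omega
      have hsep1 : vsS t C ∩ t i ⊆ t c := by
        intro v hv
        obtain ⟨k, hkC, hvk⟩ := mem_vsS_iff.1 hv.1
        exact sep_child sep hadj hkC.2.2 ⟨hv.2, hvk⟩
      have hsep2 : vsS t C ∩ vsS t (S \ C) ⊆ t i := by
        intro v hv
        obtain ⟨k, hkC, hvk⟩ := mem_vsS_iff.1 hv.1
        obtain ⟨k', hk', hvk'⟩ := mem_vsS_iff.1 hv.2
        exact sep_cross con sep hkC hk' ⟨hvk, hvk'⟩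
      have ih1 := ih c C (vsS t C ∩ t i) (closed_cmp acy hcl hadj hcS) hsep1
        (by set fl := (if t c = ∅ then (1:ℕ) else 0) with hfl
            have : fl ≤ 1 := by rw [hfl]; split_ifs <;> omega
            omega)
      have ih2 := ih i (S \ C) (vsS t (S \ C) ∩ t i) (closed_sdiff hcl hadj)
        Set.inter_subset_right
        (by rw [if_neg hti]; omega)
      refine ⟨?_, ?_, ?_⟩
      · refine ⟨Set.nonempty_iff_ne_empty.2 hti, subset_vsS hcl.1, hX,
          vsS t C, vsS t (S \ C), esS f C, esS f (S \ C),
          vsS_mono hCsub, vsS_mono Set.diff_subset,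
          fun e he => hCsub he, fun e he => he.1,
          fun e he => (hf e).trans (subset_vsS he),
          fun e he => (hf e).trans (subset_vsS he),
          ?_, ?_, hsep2, ?_, ih1.1, ih2.1⟩
        · rw [Set.union_assoc, ← vsS_union, Set.union_diff_cancel hCsub,
            Set.union_eq_self_of_subset_left (subset_vsS hcl.1)]
        · apply Set.eq_empty_iff_forall_notMem.2
          rintro e ⟨h1, h2⟩
          exact h2.2 h1
        · intro e he
          exfalso
          apply he.2
          by_cases h : f e ∈ C
          · exact Or.inl h
          · exact Or.inr ⟨he.1, h⟩
      · intro i' hi'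
        by_cases h : i' ∈ C
        · exact le_trans (ih1.2.1 i' h)
            (le_trans (le_max_left _ _) (le_max_right _ _))
        · exact le_trans (ih2.2.1 i' ⟨hi', h⟩)
            (le_trans (le_max_right _ _) (le_max_right _ _))
      · refine max_le (le_ciSup hbdd i) (max_le ih1.2.2 ih2.2.2)
    · rw [dif_neg hc]
      have hsing : ∀ j' ∈ S, j' = i := by
        intro j' hj'S
        by_contra hj'i
        obtain ⟨c, hadj, hav⟩ := exists_adj_avoid (Ne.symm hj'i) (con.preconnected i j')
        exact hc ⟨c, j', hj'S, hj'i, hadj, hav⟩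
      have hSeq : S = {i} := Set.eq_singleton_iff_unique_mem.2 ⟨hcl.1, hsing⟩
      subst hSeq
      rw [vsS_singleton]
      refine ⟨?_, ?_, ?_⟩
      · refine ⟨Set.nonempty_iff_ne_empty.2 hti, le_refl _, hX,
          ∅, ∅, ∅, ∅, Set.empty_subset _, Set.empty_subset _, Set.empty_subset _,
          Set.empty_subset _,
          fun e he => absurd he (Set.notMem_empty e),
          fun e he => absurd he (Set.notMem_empty e),
          by simp, by simp, by simp, ?_, ⟨rfl, rfl⟩, ⟨rfl, rfl⟩⟩
        intro e he
        have : f e = i := he.1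
        exact (hf e).trans (by rw [this])
      · intro i' hi'
        have : i' = i := hi'
        subst this
        exact le_max_left _ _
      · exact max_le (le_ciSup hbdd i) (by simp [RTree.width])

end Main


/-- A tree decomposition `(Y,t)` of `G` with `X ⊆ t r` yields a recursive
tree decomposition of `(G,X)` of the same width. -/
theorem stmt0 {V E ι : Type} [Finite V] [Finite E] [Finite ι]
    (ends : E → Set V) (hsmall : EndsSmall ends)
    (D : TreeDec ends ι) (X : Set V) (r : ι) (hX : X ⊆ D.t r) :
    ∃ T : RTree V, IsRTD ends Set.univ Set.univ X T ∧ T.width = D.width := by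
  classical
  haveI : Nonempty ι := ⟨r⟩
  choose f hf using D.edge
  have hcl : PathClosed D.Y r (Set.univ : Set ι) := ⟨trivial, fun _ _ _ _ _ _ => trivial⟩
  have hmain := main_rtd hsmall D.acyc D.conn D.sep hf
      (2 * (Set.univ : Set ι).ncard + 1) r Set.univ X hcl hX
      (by set fl := (if D.t r = ∅ then (1:ℕ) else 0) with hfl
          have : fl ≤ 1 := by rw [hfl]; split_ifs <;> omega
          omega)
  have hvuniv : vsS D.t (Set.univ : Set ι) = (Set.univ : Set V) := by
    ext v
    simp only [mem_vsS_iff, Set.mem_univ, iff_true, true_and]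
    exact D.cover v
  have heuniv : esS f (Set.univ : Set ι) = (Set.univ : Set E) := by
    ext e; simp [esS]
  refine ⟨FF D.Y D.t (2 * (Set.univ : Set ι).ncard + 1) r Set.univ, ?_, ?_⟩
  · have h1 := hmain.1
    rwa [hvuniv, heuniv] at h1
  · apply le_antisymm hmain.2.2
    exact ciSup_le fun i' => hmain.2.1 i' trivial

end MWidth
end

section
/- If T is a recursive tree decomposition of a graph with sources Γ = (G,X), then there exists a tree decomposition (Y,t) of G such that X is contained in the root bag of (Y,t) and the width of (Y,t) equals the width of T. -/
open CategoryTheory MonoidalCategory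

namespace MWidth

/-!
The nodes of `T` are indexed by their addresses, words over `Bool` read from the root, and the
decomposition tree joins each address to its one-letter extensions; such a prefix tree is
always a tree, and the bag at an address is the label of the subtree there.
For the connectivity condition fix a vertex `v`. The glueing conditions force `v` into every
bag between two addresses that are prefixes of one another and whose bags contain `v`. Any two
addresses whose bags contain `v` have a common prefix whose bag contains `v`: where the two
addresses part, `v` lies in both sides and hence in the separator `W`. So the walk through
that common prefix stays in bags containing `v`, and in a tree every path between its ends
runs along that walk.
-/

theorem _root_.SimpleGraph.IsAcyclic.support_subset_of_isPath {α : Type*} {G : SimpleGraph α}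
    (hG : G.IsAcyclic) {u v : α} {p : G.Walk u v} (hp : p.IsPath) (q : G.Walk u v) :
    p.support ⊆ q.support := by
  classical
  obtain rfl : p = q.bypass := congrArg Subtype.val
    ((hG.subsingleton_path u v).elim ⟨p, hp⟩ ⟨q.bypass, q.bypass_isPath⟩)
  exact q.support_bypass_subset_support

section PrefixTree

variable {α : Type*}

def IsPrefixClosed (S : Set (List α)) : Prop :=
  ∀ ⦃l⦄, l ∈ S → ∀ ⦃l'⦄, l' <+: l → l' ∈ S

def prefixGraph (S : Set (List α)) : SimpleGraph S :=
  SimpleGraph.fromRel fun i j => ∃ a, j.1 = i.1 ++ [a]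

variable {S : Set (List α)}

lemma prefixGraph_adj_of_eq_append {i j : S} {a : α} (h : j.1 = i.1 ++ [a]) :
    (prefixGraph S).Adj i j :=
  ⟨by rintro rfl; simp at h, .inl ⟨a, h⟩⟩

lemma IsPrefixClosed.exists_walk_of_prefix (hS : IsPrefixClosed S) {i j : S} (h : j.1 <+: i.1) :
    ∃ w : (prefixGraph S).Walk i j, ∀ m ∈ w.support, j.1 <+: m.1 ∧ m.1 <+: i.1 := by
  obtain ⟨s, hs⟩ := h
  induction s using List.reverseRecOn generalizing i with
  | nil =>
    obtain rfl : i = j := Subtype.ext (by simpa using hs.symm)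
    exact ⟨.nil, by simp⟩
  | append_singleton s a ih =>
    have hi : i.1 = (j.1 ++ s) ++ [a] := by rw [← hs, List.append_assoc]
    let parent : S := ⟨j.1 ++ s, hS i.2 ⟨[a], hi.symm⟩⟩
    obtain ⟨w, hw⟩ := ih (i := parent) rfl
    refine ⟨.cons (prefixGraph_adj_of_eq_append (i := parent) hi).symm w, ?_⟩
    rintro m (_ | ⟨_, hm⟩)
    · exact ⟨⟨s ++ [a], hs⟩, List.prefix_refl _⟩
    · exact ⟨(hw m hm).1, (hw m hm).2.trans ⟨[a], hi.symm⟩⟩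

lemma IsPrefixClosed.prefixGraph_connected (hS : IsPrefixClosed S) (hnil : [] ∈ S) :
    (prefixGraph S).Connected := by
  have : Nonempty S := ⟨⟨[], hnil⟩⟩
  have toRoot (i : S) : (prefixGraph S).Reachable i ⟨[], hnil⟩ :=
    (hS.exists_walk_of_prefix (i := i) List.nil_prefix).elim fun w _ => ⟨w⟩
  exact ⟨fun i j => (toRoot i).trans (toRoot j).symm⟩

lemma IsPrefixClosed.exists_walk_through (hS : IsPrefixClosed S) {i k : S} {r : List α}
    (hri : r <+: i.1) (hrk : r <+: k.1) :
    ∃ w : (prefixGraph S).Walk i k,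
      ∀ m ∈ w.support, r <+: m.1 ∧ (m.1 <+: i.1 ∨ m.1 <+: k.1) := by
  obtain ⟨w₁, hw₁⟩ := hS.exists_walk_of_prefix (j := ⟨r, hS i.2 hri⟩) hri
  obtain ⟨w₂, hw₂⟩ := hS.exists_walk_of_prefix (j := ⟨r, hS i.2 hri⟩) hrk
  refine ⟨w₁.append w₂.reverse, fun m hm => ?_⟩
  rw [SimpleGraph.Walk.mem_support_append_iff, SimpleGraph.Walk.support_reverse,
    List.mem_reverse] at hm
  rcases hm with hm | hm
  · exact ⟨(hw₁ m hm).1, .inl (hw₁ m hm).2⟩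
  · exact ⟨(hw₂ m hm).1, .inr (hw₂ m hm).2⟩

/-- Removing the edge from `i` to its child `j` leaves the extensions of `j` closed under
adjacency, so the edge is a bridge. -/
lemma prefixGraph_isAcyclic (S : Set (List α)) : (prefixGraph S).IsAcyclic := by
  rw [SimpleGraph.isAcyclic_iff_forall_adj_isBridge]
  suffices h : ∀ ⦃i j : S⦄ (a : α), j.1 = i.1 ++ [a] → (prefixGraph S).IsBridge s(i, j) by
    rintro i j ⟨-, ⟨a, ha⟩ | ⟨a, ha⟩⟩
    · exact h a ha
    · rw [Sym2.eq_swap]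
      exact h a ha
  intro i j a hj hreach
  have closed : ∀ m m' : S, ((prefixGraph S).deleteEdges {s(i, j)}).Adj m m' →
      j.1 <+: m.1 → j.1 <+: m'.1 := by
    intro m m' hadj hjm
    obtain ⟨⟨-, ⟨b, hb⟩ | ⟨b, hb⟩⟩, hne⟩ := SimpleGraph.deleteEdges_adj.mp hadj
    · exact hjm.trans ⟨[b], hb.symm⟩
    · rw [hb, List.prefix_concat_iff] at hjm
      refine hjm.resolve_left fun hjm => hne ?_
      obtain ⟨hi, -⟩ := List.append_inj' (hj.symm.trans hjm) rfl
      obtain rfl : m = j := Subtype.ext (hb.trans hjm.symm)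
      obtain rfl : m' = i := Subtype.ext hi.symm
      exact Sym2.eq_swap
  have extends_j : ∀ m,
      Relation.ReflTransGen ((prefixGraph S).deleteEdges {s(i, j)}).Adj j m → j.1 <+: m.1 := by
    intro m hm
    induction hm with
    | refl => exact List.prefix_refl _
    | tail _ hadj ih => exact closed _ _ hadj ih
  have := (extends_j i ((SimpleGraph.reachable_iff_reflTransGen _ _).mp hreach.symm)).length_le
  simp [hj] at this

end PrefixTree

namespace RTree

variable {V : Type}

def child : RTree V → Bool → RTree V
  | nil, _ => nil
  | node T1 _ _, false => T1
  | node _ _ T2, true => T2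

def subAt (T : RTree V) : List Bool → RTree V
  | [] => T
  | b :: p => (T.child b).subAt p

def bag (T : RTree V) (p : List Bool) : Set V := (T.subAt p).label

@[simp] lemma nil_subAt (p : List Bool) : (nil : RTree V).subAt p = nil := by
  induction p with
  | nil => rfl
  | cons b p ih => exact ih

@[simp] lemma nil_bag (p : List Bool) : (nil : RTree V).bag p = ∅ := by
  simp [bag, label]

lemma subAt_append (T : RTree V) (p q : List Bool) :
    T.subAt (p ++ q) = (T.subAt p).subAt q := by
  induction p generalizing T with
  | nil => rfl
  | cons b p ih => exact ih (T.child b)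

lemma subAt_ne_nil_of_prefix {T : RTree V} {p q : List Bool} (hq : q <+: p)
    (h : T.subAt p ≠ nil) : T.subAt q ≠ nil := by
  obtain ⟨s, rfl⟩ := hq
  rw [subAt_append] at h
  rintro hq
  simp [hq] at h

lemma subAt_ne_nil_of_mem_bag {T : RTree V} {p : List Bool} {v : V} (h : v ∈ T.bag p) :
    T.subAt p ≠ nil := by
  rintro hp
  simp [bag, hp, label] at h

def depth : RTree V → ℕ
  | nil => 0
  | node T1 _ T2 => max T1.depth T2.depth + 1

lemma length_le_depth {T : RTree V} {p : List Bool} (h : T.subAt p ≠ nil) :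
    p.length ≤ T.depth := by
  induction p generalizing T with
  | nil => exact Nat.zero_le _
  | cons b p ih =>
    cases T with
    | nil => simp at h
    | node T1 W T2 =>
      have := ih h
      cases b <;> simp only [child, depth, List.length_cons] at this ⊢ <;> omega

/-- The addresses of the nodes of `T`. The root address is kept even when `T = nil`, so that the
decomposition tree is never empty. -/
def positions (T : RTree V) : Set (List Bool) := {p | p = [] ∨ T.subAt p ≠ nil}

lemma isPrefixClosed_positions (T : RTree V) : IsPrefixClosed T.positions := by
  rintro p (rfl | hp) q hq
  · exact .inl (List.prefix_nil.mp hq)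
  · exact .inr (subAt_ne_nil_of_prefix hq hp)

lemma finite_positions (T : RTree V) : T.positions.Finite :=
  (List.finite_length_le Bool T.depth).subset <| by
    rintro p (rfl | hp)
    exacts [Nat.zero_le _, length_le_depth hp]

lemma width_le_iff {T : RTree V} {n : ℕ} : T.width ≤ n ↔ ∀ p, (T.bag p).ncard ≤ n := by
  induction T with
  | nil => simp [width]
  | node T1 W T2 ih1 ih2 =>
    rw [width, max_le_iff, max_le_iff, ih1, ih2]
    constructor
    · rintro ⟨hW, h1, h2⟩ (_ | ⟨_ | _, p⟩)
      exacts [hW, h1 p, h2 p]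
    · intro h
      exact ⟨h [], fun p => h (false :: p), fun p => h (true :: p)⟩

lemma iSup_ncard_bag_eq_width (T : RTree V) :
    ⨆ p : T.positions, (T.bag p).ncard = T.width := by
  have : Finite T.positions := T.finite_positions.to_subtype
  have : Nonempty T.positions := ⟨⟨[], .inl rfl⟩⟩
  refine le_antisymm (ciSup_le fun p => width_le_iff.mp le_rfl p) (width_le_iff.mpr fun p => ?_)
  by_cases hp : T.subAt p = nil
  · simp [bag, hp, label]
  · exact le_ciSup (Set.finite_range fun p : T.positions => (T.bag p).ncard).bddAbove
      (⟨p, .inr hp⟩ : T.positions)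

end RTree

section RecursiveTreeDecomposition

open RTree

variable {V E : Type} {ends : E → Set V} {vs : Set V} {es : Set E} {X : Set V} {T : RTree V}

lemma IsRTD.label_subset (h : IsRTD ends vs es X T) : T.label ⊆ vs := by
  cases T with
  | nil => exact Set.empty_subset vs
  | node T1 W T2 => exact h.2.1

lemma IsRTD.subset_label (h : IsRTD ends vs es X T) (hX : X ⊆ vs) : X ⊆ T.label := by
  cases T with
  | nil =>
    rw [h.1] at hX
    exact hX
  | node T1 W T2 => exact h.2.2.1

lemma IsRTD.exists_child {T1 T2 : RTree V} {W : Set V} (h : IsRTD ends vs es X (node T1 W T2))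
    (b : Bool) :
    ∃ vs' es', vs' ⊆ vs ∧ IsRTD ends vs' es' (vs' ∩ W) ((node T1 W T2).child b) := by
  obtain ⟨-, -, -, vs1, vs2, es1, es2, h1, h2, -, -, -, -, -, -, -, -, hT1, hT2⟩ := h
  cases b
  exacts [⟨vs1, es1, h1, hT1⟩, ⟨vs2, es2, h2, hT2⟩]

lemma IsRTD.bag_subset (h : IsRTD ends vs es X T) (p : List Bool) : T.bag p ⊆ vs := by
  induction p generalizing T vs es X with
  | nil => exact h.label_subset
  | cons b p ih =>
    cases T with
    | nil => simp
    | node T1 W T2 =>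
      obtain ⟨vs', es', hsub, h'⟩ := h.exists_child b
      exact (ih h').trans hsub

lemma IsRTD.mem_of_mem_bag_of_ne {T1 T2 : RTree V} {W : Set V}
    (h : IsRTD ends vs es X (node T1 W T2)) {a b : Bool} (hab : a ≠ b) {p q : List Bool} {v : V}
    (ha : v ∈ (node T1 W T2).bag (a :: p)) (hb : v ∈ (node T1 W T2).bag (b :: q)) :
    v ∈ W := by
  obtain ⟨-, -, -, vs1, vs2, es1, es2, -, -, -, -, -, -, -, -, hsep, -, hT1, hT2⟩ := h
  cases a <;> cases b
  exacts [absurd rfl hab, hsep ⟨hT1.bag_subset p ha, hT2.bag_subset q hb⟩,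
    hsep ⟨hT1.bag_subset q hb, hT2.bag_subset p ha⟩, absurd rfl hab]

lemma IsRTD.mem_bag_of_prefix (h : IsRTD ends vs es X T) {r m i : List Bool} {v : V}
    (hrm : r <+: m) (hmi : m <+: i) (hr : v ∈ T.bag r) (hi : v ∈ T.bag i) : v ∈ T.bag m := by
  induction m generalizing T vs es X r i with
  | nil => rwa [List.prefix_nil.mp hrm] at hr
  | cons b m ih =>
    obtain ⟨i, rfl, hmi'⟩ : ∃ i', i = b :: i' ∧ m <+: i' := by
      obtain ⟨s, rfl⟩ := hmi
      exact ⟨m ++ s, rfl, List.prefix_append m s⟩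
    cases T with
    | nil => simp at hi
    | node T1 W T2 =>
      obtain ⟨vs', es', -, h'⟩ := h.exists_child b
      rcases List.prefix_cons_iff.mp hrm with rfl | ⟨r, rfl, hrm'⟩
      · -- `v` lies in the root bag and in a bag of the child, so it is a source of the child
        exact ih h' List.nil_prefix hmi'
          (h'.subset_label Set.inter_subset_left ⟨h'.bag_subset i hi, hr⟩) hi
      · exact ih h' hrm' hmi' hr hi

lemma IsRTD.exists_prefix_mem_bag (h : IsRTD ends vs es X T) {i k : List Bool} {v : V}
    (hi : v ∈ T.bag i) (hk : v ∈ T.bag k) : ∃ r, r <+: i ∧ r <+: k ∧ v ∈ T.bag r := by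
  induction i generalizing T vs es X k with
  | nil => exact ⟨[], List.nil_prefix, List.nil_prefix, hi⟩
  | cons a i ih =>
    rcases k with _ | ⟨b, k⟩
    · exact ⟨[], List.nil_prefix, List.nil_prefix, hk⟩
    cases T with
    | nil => simp at hi
    | node T1 W T2 =>
      by_cases hab : a = b
      · subst hab
        obtain ⟨vs', es', -, h'⟩ := h.exists_child a
        obtain ⟨r, hri, hrk, hr⟩ := ih h' hi hk
        exact ⟨a :: r, List.cons_prefix_cons.mpr ⟨rfl, hri⟩,
          List.cons_prefix_cons.mpr ⟨rfl, hrk⟩, hr⟩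
      · exact ⟨[], List.nil_prefix, List.nil_prefix, h.mem_of_mem_bag_of_ne hab hi hk⟩

lemma IsRTD.exists_mem_bag (h : IsRTD ends vs es X T) {v : V} (hv : v ∈ vs) :
    ∃ p, v ∈ T.bag p := by
  induction T generalizing vs es X with
  | nil => exact absurd (h.1 ▸ hv) (Set.notMem_empty v)
  | node T1 W T2 ih1 ih2 =>
    obtain ⟨-, -, -, vs1, vs2, es1, es2, -, -, -, -, -, -, hunion, -, -, -, hT1, hT2⟩ := h
    rcases hunion ▸ hv with (hW | h1) | h2
    · exact ⟨[], hW⟩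
    · obtain ⟨p, hp⟩ := ih1 hT1 h1
      exact ⟨false :: p, hp⟩
    · obtain ⟨p, hp⟩ := ih2 hT2 h2
      exact ⟨true :: p, hp⟩

lemma IsRTD.exists_ends_subset_bag (h : IsRTD ends vs es X T) {e : E} (he : e ∈ es) :
    ∃ p, T.subAt p ≠ nil ∧ ends e ⊆ T.bag p := by
  induction T generalizing vs es X with
  | nil => exact absurd (h.2 ▸ he) (Set.notMem_empty e)
  | node T1 W T2 ih1 ih2 =>
    obtain ⟨-, -, -, vs1, vs2, es1, es2, -, -, -, -, -, -, -, -, -, hW, hT1, hT2⟩ := h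
    by_cases he1 : e ∈ es1
    · obtain ⟨p, hp, hsub⟩ := ih1 hT1 he1
      exact ⟨false :: p, hp, hsub⟩
    by_cases he2 : e ∈ es2
    · obtain ⟨p, hp, hsub⟩ := ih2 hT2 he2
      exact ⟨true :: p, hp, hsub⟩
    exact ⟨[], nofun, hW e ⟨he, by simp [he1, he2]⟩⟩

lemma IsRTD.bag_inter_subset_of_mem_support (h : IsRTD ends vs es X T) {i j k : T.positions}
    (w : (prefixGraph T.positions).Walk i k) (hw : w.IsPath) (hj : j ∈ w.support) :
    T.bag i ∩ T.bag k ⊆ T.bag j := by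
  rintro v ⟨hi, hk⟩
  obtain ⟨r, hri, hrk, hr⟩ := h.exists_prefix_mem_bag hi hk
  obtain ⟨w', hw'⟩ := T.isPrefixClosed_positions.exists_walk_through hri hrk
  obtain ⟨hrj, hji | hjk⟩ := hw' j ((prefixGraph_isAcyclic _).support_subset_of_isPath hw w' hj)
  · exact h.mem_bag_of_prefix hrj hji hr hi
  · exact h.mem_bag_of_prefix hrj hjk hr hk

def IsRTD.treeDec (h : IsRTD ends Set.univ Set.univ X T) : TreeDec ends T.positions where
  Y := prefixGraph T.positions
  conn := T.isPrefixClosed_positions.prefixGraph_connected (.inl rfl)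
  acyc := prefixGraph_isAcyclic _
  t p := T.bag p
  cover v :=
    let ⟨p, hp⟩ := h.exists_mem_bag (Set.mem_univ v)
    ⟨⟨p, .inr (subAt_ne_nil_of_mem_bag hp)⟩, hp⟩
  edge e :=
    let ⟨p, hp, he⟩ := h.exists_ends_subset_bag (Set.mem_univ e)
    ⟨⟨p, .inr hp⟩, he⟩
  sep _ _ _ := h.bag_inter_subset_of_mem_support

end RecursiveTreeDecomposition

theorem stmt1_general {V E : Type}
    (ends : E → Set V)
    (X : Set V) (T : RTree V) (hT : IsRTD ends Set.univ Set.univ X T) :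
    ∃ (ι : Type) (_ : Finite ι) (D : TreeDec ends ι) (r : ι),
      X ⊆ D.t r ∧ D.width = T.width :=
  ⟨T.positions, T.finite_positions.to_subtype, hT.treeDec, ⟨[], .inl rfl⟩,
    hT.subset_label (Set.subset_univ X), T.iSup_ncard_bag_eq_width⟩

/-- A recursive tree decomposition of `(G,X)` yields a tree decomposition
of `G` with `X` inside the root bag and the same width. -/
theorem stmt1 {V E : Type} [Finite V] [Finite E]
    (ends : E → Set V) (hsmall : EndsSmall ends)
    (X : Set V) (T : RTree V) (hT : IsRTD ends Set.univ Set.univ X T) :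
    ∃ (ι : Type) (_ : Finite ι) (D : TreeDec ends ι) (r : ι),
      X ⊆ D.t r ∧ D.width = T.width :=
  stmt1_general ends X T hT

end MWidth
end

section
/- If (P,p) = (V₁,…,V_r) is a path decomposition of a graph G and Γ = (G,X) is a graph with sources with X ⊆ V₁, then there exists a recursive path decomposition T of Γ with the same width as (P,p). -/
open CategoryTheory MonoidalCategory

namespace MWidth

section


variable {V E : Type}

/-- union of the bags of a list -/
def bunion (L : List (Set V)) : Set V := {v | ∃ W ∈ L, v ∈ W}

open Classical in
/-- remove empty bags -/
noncomputable def trim : List (Set V) → List (Set V)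
  | [] => []
  | W :: L => if W.Nonempty then W :: trim L else trim L

lemma bunion_cons (W : Set V) (L : List (Set V)) : bunion (W :: L) = W ∪ bunion L := by
  ext v; simp [bunion, List.mem_cons]

lemma aux_rpd (ends : E → Set V) (hsmall : EndsSmall ends) :
    ∀ (L : List (Set V)),
      (∀ i j k : ℕ, i ≤ j → j ≤ k → L.getD i ∅ ∩ L.getD k ∅ ⊆ L.getD j ∅) →
      ∀ (es : Set E), (∀ e ∈ es, ∃ W ∈ L, ends e ⊆ W) →
      ∀ (X : Set V), X ⊆ L.getD 0 ∅ →
      IsRPD ends (bunion L) es X (trim L) ∧ pdWidth (trim L) = pdWidth L := by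
  intro L
  induction L with
  | nil =>
    intro _ es hedge X _
    have hes : es = ∅ := by
      ext e; simp only [Set.mem_empty_iff_false, iff_false]
      intro he
      obtain ⟨W, hW, _⟩ := hedge e he
      simp at hW
    have hvs : bunion ([] : List (Set V)) = ∅ := by
      ext v; simp [bunion]
    refine ⟨?_, rfl⟩
    rw [trim]
    exact ⟨hvs, hes⟩
  | cons W L ih =>
    intro hsep es hedge X hX
    have hsep' : ∀ i j k : ℕ, i ≤ j → j ≤ k →
        L.getD i ∅ ∩ L.getD k ∅ ⊆ L.getD j ∅ := by
      intro i j k hij hjk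
      have := hsep (i+1) (j+1) (k+1) (by omega) (by omega)
      simpa using this
    by_cases hW : W.Nonempty
    · -- nonempty head bag
      rw [trim, if_pos hW, bunion_cons]
      have hXW : X ⊆ W := by simpa using hX
      set vs' : Set V := bunion L with hvs'
      set es' : Set E := {e ∈ es | ∃ W' ∈ L, ends e ⊆ W'} with hes'
      have hrec := ih hsep' es' (fun e he => he.2) (W ∩ vs')
        (by
          rintro v ⟨hvW, hv'⟩
          obtain ⟨W', hW', hvW'⟩ := hv'
          obtain ⟨k, hk, rfl⟩ := List.mem_iff_getElem.1 hW'
          have h01 := hsep 0 1 (k+1) (by omega) (by omega)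
          have : v ∈ (W :: L).getD 0 ∅ ∩ (W :: L).getD (k+1) ∅ := by
            refine ⟨by simpa using hvW, ?_⟩
            simp only [List.getD_cons_succ]
            rwa [List.getD_eq_getElem _ _ hk]
          have := h01 this
          simpa using this)
      refine ⟨⟨hW, Set.subset_union_left, hXW, vs', es', Set.subset_union_right,
        fun e he => he.1, ?_, rfl, ?_, hrec.1⟩, ?_⟩
      · -- edges of es' have both ends in vs'
        rintro e ⟨_, W', hW', hew⟩
        exact hew.trans (fun v hv => ⟨W', hW', hv⟩)
      · -- edges of es \ es' have ends in W
        rintro e ⟨he, he'⟩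
        obtain ⟨W'', hW'', hew⟩ := hedge e he
        rcases List.mem_cons.1 hW'' with rfl | hmem
        · exact hew
        · exact absurd ⟨he, W'', hmem, hew⟩ he'
      · -- width
        rw [pdWidth, pdWidth, hrec.2]
    · -- empty head bag
      have hWe : W = ∅ := Set.not_nonempty_iff_eq_empty.1 hW
      rw [trim, if_neg hW]
      have hbu : bunion (W :: L) = bunion L := by
        rw [bunion_cons, hWe, Set.empty_union]
      have hedge' : ∀ e ∈ es, ∃ W' ∈ L, ends e ⊆ W' := by
        intro e he
        obtain ⟨W'', hW'', hew⟩ := hedge e he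
        rcases List.mem_cons.1 hW'' with rfl | hmem
        · obtain ⟨u, w, huw⟩ := hsmall e
          exfalso
          have : u ∈ ends e := by rw [huw]; exact Or.inl rfl
          have := hew this
          rw [hWe] at this
          exact this
        · exact ⟨W'', hmem, hew⟩
      have hX' : X ⊆ L.getD 0 ∅ := by
        intro v hv
        have := hX hv
        simp only [List.getD_cons_zero] at this
        rw [hWe] at this
        exact absurd this (Set.notMem_empty v)
      have hrec := ih hsep' es hedge' X hX'
      rw [← hbu] at hrec
      refine ⟨hrec.1, ?_⟩
      rw [hrec.2, pdWidth, hWe, Set.ncard_empty]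
      omega

end

/-- A path decomposition `(V₁,…,V_r)` of `G` with `X ⊆ V₁` yields a
recursive path decomposition of `(G,X)` of the same width. -/
theorem stmt2 {V E : Type} [Finite V] [Finite E]
    (ends : E → Set V) (hsmall : EndsSmall ends)
    (L : List (Set V)) (hL : IsPathDec ends L)
    (X : Set V) (hX : X ⊆ L.headD ∅) :
    ∃ T : List (Set V), IsRPD ends Set.univ Set.univ X T ∧ pdWidth T = pdWidth L := by
  obtain ⟨hcover, hedge, hsep⟩ := hL
  have hbu : bunion L = (Set.univ : Set V) := by
    ext v
    simp only [Set.mem_univ, iff_true, bunion, Set.mem_setOf_eq]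
    exact hcover v
  have hX0 : X ⊆ L.getD 0 ∅ := by
    cases L with
    | nil => exact hX
    | cons W L => exact hX
  have hsep' : ∀ i j k : ℕ, i ≤ j → j ≤ k → L.getD i ∅ ∩ L.getD k ∅ ⊆ L.getD j ∅ := by
    intro i j k hij hjk
    by_cases hk : k < L.length
    · exact hsep i j k hij hjk hk
    · intro v hv
      have : L.getD k ∅ = ∅ := List.getD_eq_default _ _ (by omega)
      rw [this] at hv
      exact absurd hv.2 (Set.notMem_empty v)
  have := aux_rpd ends hsmall L hsep' Set.univ (fun e _ => hedge e) X hX0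
  rw [hbu] at this
  exact ⟨trim L, this⟩

end MWidth
end

section
/- If T is a recursive path decomposition of a graph with sources Γ = (G,X), then there exists a path decomposition (P,p) of G such that X is contained in the first bag of (P,p) and width(P,p) = width(T). -/
open CategoryTheory MonoidalCategory

namespace MWidth

/-!
The bag list of a recursive path decomposition is itself a path decomposition, of the same
width and with the sources in its first bag. The only non-trivial condition is interpolation:
a vertex of the first bag `V₁` that lies in a later bag lies in `V₁ ∩ V'`, the sources of the
tail, and inductively the sources of a recursive path decomposition lie in every bag up to any
later bag containing them.
-/

section

variable {V E : Type} {ends : E → Set V}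

namespace IsRPD

theorem getD_subset :
    ∀ {vs : Set V} {es : Set E} {X : Set V} {L : List (Set V)} (m : ℕ),
      IsRPD ends vs es X L → L.getD m ∅ ⊆ vs
  | _, _, _, [], _, _ => by simp
  | _, _, _, _ :: _, 0, h => h.2.1
  | _, _, _, _ :: _, m + 1, ⟨_, _, _, _, _, hvs', _, _, _, _, hL⟩ =>
      (getD_subset m hL).trans hvs'

theorem inter_getD_subset_of_le :
    ∀ {vs : Set V} {es : Set E} {X : Set V} {L : List (Set V)} {j m : ℕ},
      IsRPD ends vs es X L → j ≤ m → X ∩ L.getD m ∅ ⊆ L.getD j ∅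
  | _, _, _, [], _, _, _, _ => by simp
  | _, _, _, _ :: _, 0, _, h, _ => fun _ hv => h.2.2.1 hv.1
  | _, _, _, _ :: _, _ + 1, 0, _, hjm => absurd hjm (Nat.not_succ_le_zero _)
  | _, _, _, _ :: _, _ + 1, m + 1, ⟨_, _, hX, _, _, _, _, _, _, _, hL⟩, hjm =>
      fun _ ⟨hvX, hvm⟩ =>
        inter_getD_subset_of_le hL (Nat.le_of_succ_le_succ hjm)
          ⟨⟨hX hvX, getD_subset m hL hvm⟩, hvm⟩

theorem getD_inter_getD_subset_of_le :
    ∀ {vs : Set V} {es : Set E} {X : Set V} {L : List (Set V)} {i j k : ℕ},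
      IsRPD ends vs es X L → i ≤ j → j ≤ k → L.getD i ∅ ∩ L.getD k ∅ ⊆ L.getD j ∅
  | _, _, _, [], _, _, _, _, _, _ => by simp
  | _, _, _, _ :: _, 0, 0, _, _, _, _ => Set.inter_subset_left
  | _, _, _, _ :: _, 0, _ + 1, 0, _, _, hjk => absurd hjk (Nat.not_succ_le_zero _)
  | _, _, _, _ :: _, 0, _ + 1, k + 1, ⟨_, _, _, _, _, _, _, _, _, _, hL⟩, _, hjk =>
      fun _ ⟨hv₁, hvk⟩ =>
        inter_getD_subset_of_le hL (Nat.le_of_succ_le_succ hjk)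
          ⟨⟨hv₁, getD_subset k hL hvk⟩, hvk⟩
  | _, _, _, _ :: _, _ + 1, 0, _, _, hij, _ => absurd hij (Nat.not_succ_le_zero _)
  | _, _, _, _ :: _, _ + 1, _ + 1, 0, _, _, hjk => absurd hjk (Nat.not_succ_le_zero _)
  | _, _, _, _ :: _, i + 1, _ + 1, k + 1, ⟨_, _, _, _, _, _, _, _, _, _, hL⟩, hij, hjk =>
      getD_inter_getD_subset_of_le (i := i) (k := k) hL
        (Nat.le_of_succ_le_succ hij) (Nat.le_of_succ_le_succ hjk)

theorem exists_mem_of_mem :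
    ∀ {vs : Set V} {es : Set E} {X : Set V} {L : List (Set V)} {v : V},
      IsRPD ends vs es X L → v ∈ vs → ∃ W ∈ L, v ∈ W
  | _, _, _, [], _, h, hv => absurd (h.1 ▸ hv) (Set.notMem_empty _)
  | _, _, _, V₁ :: _, _, ⟨_, _, _, _, _, _, _, _, hunion, _, hL⟩, hv => by
    rcases hunion ▸ hv with hv | hv
    · exact ⟨V₁, List.mem_cons_self, hv⟩
    · obtain ⟨W, hW, hvW⟩ := exists_mem_of_mem hL hv
      exact ⟨W, List.mem_cons_of_mem _ hW, hvW⟩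

theorem exists_ends_subset :
    ∀ {vs : Set V} {es : Set E} {X : Set V} {L : List (Set V)} {e : E},
      IsRPD ends vs es X L → e ∈ es → ∃ W ∈ L, ends e ⊆ W
  | _, _, _, [], _, h, he => absurd (h.2 ▸ he) (Set.notMem_empty _)
  | _, _, _, V₁ :: _, e, ⟨_, _, _, _, es', _, _, _, _, hrest, hL⟩, he => by
    by_cases he' : e ∈ es'
    · obtain ⟨W, hW, heW⟩ := exists_ends_subset hL he'
      exact ⟨W, List.mem_cons_of_mem _ hW, heW⟩
    · exact ⟨V₁, List.mem_cons_self, hrest e ⟨he, he'⟩⟩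

theorem subset_headD {vs : Set V} {es : Set E} {X : Set V} {L : List (Set V)}
    (h : IsRPD ends vs es X L) (hX : X ⊆ vs) : X ⊆ L.headD ∅ := by
  cases L with
  | nil => simpa [h.1] using hX
  | cons _ _ => exact h.2.2.1

theorem isPathDec {X : Set V} {L : List (Set V)} (h : IsRPD ends Set.univ Set.univ X L) :
    IsPathDec ends L :=
  ⟨fun _ => h.exists_mem_of_mem (Set.mem_univ _),
    fun _ => h.exists_ends_subset (Set.mem_univ _),
    fun _ _ _ hij hjk _ => h.getD_inter_getD_subset_of_le hij hjk⟩

end IsRPD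

end

theorem stmt3_general {V E : Type}
    (ends : E → Set V)
    (X : Set V) (T : List (Set V)) (hT : IsRPD ends Set.univ Set.univ X T) :
    ∃ L : List (Set V), IsPathDec ends L ∧ X ⊆ L.headD ∅ ∧ pdWidth L = pdWidth T :=
  ⟨T, hT.isPathDec, hT.subset_headD (Set.subset_univ X), rfl⟩

/-- A recursive path decomposition of `(G,X)` yields a path decomposition
of `G` with `X` inside the first bag and the same width. -/
theorem stmt3 {V E : Type} [Finite V] [Finite E]
    (ends : E → Set V) (hsmall : EndsSmall ends)
    (X : Set V) (T : List (Set V)) (hT : IsRPD ends Set.univ Set.univ X T) :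
    ∃ L : List (Set V), IsPathDec ends L ∧ X ⊆ L.headD ∅ ∧ pdWidth L = pdWidth T :=
  stmt3_general ends X T hT

end MWidth
end

section
/- For every branch decomposition (Y,b) of a graph G and every graph with sources Γ = (G,X), there exists a recursive branch decomposition T of Γ with width(T) ≤ width(Y,b) + |X|. -/
open CategoryTheory MonoidalCategory

namespace MWidth

/-!
Orient an edge `uw` of the decomposition tree and let `A` be the set of edges of `G` sitting at
leaves on the `u`-side; its boundary `∂A = ends(A) ∩ ends(Aᶜ)` has at most `width(Y,b)` vertices.
Below `u` the subcubic tree splits `A` into at most two sides `A₁ ⊔ A₂`, and the glueing condition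
creates only sources in `ends(A₁) ∩ ends(A₂) ⊆ ∂A₁ ∩ ∂A₂`; sources inherited from the parent stay in
`∂A₁ ∪ X` resp. `∂A₂ ∪ X`. So the invariant "sources `⊆ ∂A ∪ X`" survives the recursion and every
label has at most `|∂A| + |X| ≤ width(Y,b) + |X|` sources. The recursion starts from both sides of
any edge of `Y`, whose union is `E` with empty boundary.
-/

section Proof

open SimpleGraph

variable {V E ι : Type}

section EdgeSets

variable (ends : E → Set V)

lemma edgeEnds_mono {A B : Set E} (h : A ⊆ B) : edgeEnds ends A ⊆ edgeEnds ends B :=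
  Set.biUnion_subset_biUnion_left h

lemma edgeEnds_union (A B : Set E) :
    edgeEnds ends (A ∪ B) = edgeEnds ends A ∪ edgeEnds ends B :=
  Set.biUnion_union A B ends

lemma ends_subset_edgeEnds {A : Set E} {e : E} (he : e ∈ A) : ends e ⊆ edgeEnds ends A :=
  Set.subset_biUnion_of_mem (u := ends) he

def boundary (A : Set E) : Set V := edgeEnds ends A ∩ edgeEnds ends Aᶜ

lemma boundary_univ : boundary ends (Set.univ : Set E) = ∅ := by
  simp [boundary, edgeEnds]

lemma ncard_le_of_subset_boundary_union [Finite V] {A : Set E} {X' X : Set V} {n : ℕ}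
    (hA : (boundary ends A).ncard ≤ n) (hX' : X' ⊆ boundary ends A ∪ X) :
    X'.ncard ≤ n + X.ncard :=
  calc X'.ncard ≤ (boundary ends A ∪ X).ncard := Set.ncard_le_ncard hX'
    _ ≤ (boundary ends A).ncard + X.ncard := Set.ncard_union_le _ _
    _ ≤ n + X.ncard := Nat.add_le_add_right hA _

lemma union_inter_subset_boundary_union {A B : Set E} (hAB : Disjoint A B) {S W X' X : Set V}
    (hS : S ⊆ edgeEnds ends A ∩ edgeEnds ends B) (hW : W ∩ edgeEnds ends B ⊆ edgeEnds ends A)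
    (hX' : X' ⊆ boundary ends (A ∪ B) ∪ X) : S ∪ (X' ∩ W) ⊆ boundary ends A ∪ X := by
  rintro v (hv | ⟨hvX', hvW⟩)
  · exact Or.inl ⟨(hS hv).1, edgeEnds_mono ends hAB.subset_compl_left (hS hv).2⟩
  · rcases hX' hvX' with ⟨hvAB, hvout⟩ | hvX
    · refine Or.inl ⟨?_,
        edgeEnds_mono ends (Set.compl_subset_compl.mpr Set.subset_union_left) hvout⟩
      rcases (edgeEnds_union ends A B ▸ hvAB) with hvA | hvB
      · exact hvA
      · exact hW ⟨hvW, hvB⟩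
    · exact Or.inr hvX

end EdgeSets

section Decomposable

variable (ends : E → Set V)

def Decomposable (X : Set V) (n : ℕ) (A : Set E) : Prop :=
  ∀ vs X' : Set V, edgeEnds ends A ⊆ vs → X' ⊆ boundary ends A ∪ X →
    ∃ T : BT V E, IsRBD ends vs A X' T ∧ T.width ≤ n + X.ncard

variable {ends} {X : Set V} {n : ℕ}

lemma decomposable_empty : Decomposable ends X n ∅ :=
  fun _ _ _ _ => ⟨.nil, rfl, Nat.zero_le _⟩

lemma decomposable_singleton [Finite V] {e : E} (hbd : (boundary ends {e}).ncard ≤ n) :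
    Decomposable ends X n {e} :=
  fun vs X' _ hX' => ⟨.leaf vs {e} X', ⟨rfl, rfl, rfl, e, rfl⟩,
    ncard_le_of_subset_boundary_union ends hbd hX'⟩

lemma Decomposable.union [Finite V] {A₁ A₂ : Set E} (h₁ : Decomposable ends X n A₁)
    (h₂ : Decomposable ends X n A₂) (hdisj : Disjoint A₁ A₂)
    (hbd : (boundary ends (A₁ ∪ A₂)).ncard ≤ n) : Decomposable ends X n (A₁ ∪ A₂) := by
  intro vs X' hvs hX'
  rw [edgeEnds_union] at hvs
  set vs₁ := (vs \ edgeEnds ends A₂) ∪ edgeEnds ends A₁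
  set vs₂ := edgeEnds ends A₂
  have hW₁ : vs₁ ∩ vs₂ ⊆ edgeEnds ends A₁ := by
    rintro v ⟨hv | hv, hv₂⟩
    exacts [absurd hv₂ hv.2, hv]
  have hS : vs₁ ∩ vs₂ ⊆ edgeEnds ends A₁ ∩ edgeEnds ends A₂ := fun v hv => ⟨hW₁ hv, hv.2⟩
  obtain ⟨T₁, hT₁, hwidth₁⟩ := h₁ vs₁ ((vs₁ ∩ vs₂) ∪ (X' ∩ vs₁)) Set.subset_union_right
    (union_inter_subset_boundary_union ends hdisj hS hW₁ hX')
  obtain ⟨T₂, hT₂, hwidth₂⟩ := h₂ vs₂ ((vs₁ ∩ vs₂) ∪ (X' ∩ vs₂)) subset_rfl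
    (union_inter_subset_boundary_union ends hdisj.symm (hS.trans (Set.inter_comm _ _).le)
      Set.inter_subset_left (Set.union_comm A₁ A₂ ▸ hX'))
  refine ⟨.node T₁ vs (A₁ ∪ A₂) X' T₂, ⟨rfl, rfl, rfl, vs₁, vs₂, A₁, A₂,
    Set.union_subset Set.sdiff_subset (Set.subset_union_left.trans hvs),
    Set.subset_union_right.trans hvs,
    fun e he => (ends_subset_edgeEnds ends he).trans Set.subset_union_right,
    fun e he => ends_subset_edgeEnds ends he, rfl, hdisj.inter_eq, ?_, hT₁, hT₂⟩,
    max_le (ncard_le_of_subset_boundary_union ends hbd hX') (max_le hwidth₁ hwidth₂)⟩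
  ext v
  have hv := @hvs v
  simp only [vs₁, vs₂, Set.mem_union, Set.mem_sdiff] at hv ⊢
  tauto

end Decomposable

section Branch

variable {G : SimpleGraph ι}

def branch (G : SimpleGraph ι) (u w : ι) : Set ι :=
  {x | (G.deleteEdges {s(u, w)}).Reachable u x}

lemma mem_branch_iff_exists_walk {u w x : ι} :
    x ∈ branch G u w ↔ ∃ p : G.Walk u x, s(u, w) ∉ p.edges :=
  reachable_deleteEdges_iff_exists_walk

lemma notMem_branch_of_adj (hG : G.IsAcyclic) {u w : ι} (huw : G.Adj u w) :
    w ∉ branch G u w :=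
  isBridge_iff.mp (isAcyclic_iff_forall_adj_isBridge.mp hG huw)

lemma isCompl_branch (hconn : G.Connected) (hacyc : G.IsAcyclic) {u w : ι} (huw : G.Adj u w) :
    IsCompl (branch G u w) (branch G w u) := by
  classical
  refine ⟨Set.disjoint_left.mpr fun x hxu hxw => ?_,
    codisjoint_iff.mpr (Set.eq_univ_of_forall fun x => ?_)⟩
  · have hwx : (G.deleteEdges {s(u, w)}).Reachable w x := by rwa [Sym2.eq_swap]
    exact notMem_branch_of_adj hacyc huw (hxu.trans hwx.symm)
  · show x ∈ branch G u w ∪ branch G w u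
    obtain ⟨P, hP⟩ := hconn.exists_isPath x u
    by_cases hPuw : s(u, w) ∈ P.edges
    · have hwP := P.snd_mem_support_of_mem_edges hPuw
      have huP := Walk.endpoint_notMem_support_takeUntil hP hwP huw.ne
      refine Or.inr (mem_branch_iff_exists_walk.mpr ⟨(P.takeUntil w hwP).reverse, ?_⟩)
      rw [Walk.edges_reverse, List.mem_reverse]
      exact fun h => huP ((P.takeUntil w hwP).snd_mem_support_of_mem_edges h)
    · refine Or.inl (mem_branch_iff_exists_walk.mpr ⟨P.reverse, ?_⟩)
      rwa [Walk.edges_reverse, List.mem_reverse]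

lemma mem_branch_iff (hacyc : G.IsAcyclic) {u w x : ι} (huw : G.Adj u w) :
    x ∈ branch G u w ↔ x = u ∨ ∃ w', G.Adj u w' ∧ w' ≠ w ∧ x ∈ branch G w' u := by
  classical
  constructor
  · intro hx
    obtain ⟨p, hp⟩ := mem_branch_iff_exists_walk.mp hx
    have hbp : s(u, w) ∉ p.bypass.edges := fun h => hp (p.edges_bypass_subset_edges h)
    cases hpath : p.bypass with
    | nil => exact Or.inl rfl
    | @cons _ y _ huy q =>
      have hq := p.bypass_isPath
      rw [hpath, Walk.cons_isPath_iff] at hq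
      rw [hpath, Walk.edges_cons, List.mem_cons, not_or] at hbp
      refine Or.inr ⟨y, huy, fun hyw => hbp.1 (by rw [hyw]), ?_⟩
      exact mem_branch_iff_exists_walk.mpr
        ⟨q, fun h => hq.2 (q.snd_mem_support_of_mem_edges h)⟩
  · rintro (rfl | ⟨w', huw', hne, hx⟩)
    · exact Reachable.refl _
    obtain ⟨q, hq⟩ := mem_branch_iff_exists_walk.mp hx
    have huq : u ∉ q.support := fun hu =>
      notMem_branch_of_adj hacyc huw'.symm (mem_branch_iff_exists_walk.mpr
        ⟨q.takeUntil u hu, fun h => hq (q.edges_takeUntil_subset_edges hu h)⟩)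
    refine mem_branch_iff_exists_walk.mpr ⟨.cons huw' q, ?_⟩
    rw [Walk.edges_cons, List.mem_cons, not_or]
    exact ⟨fun h => hne (Sym2.congr_right.mp h).symm,
      fun h => huq (q.fst_mem_support_of_mem_edges h)⟩

lemma branch_ssubset (hacyc : G.IsAcyclic) {u w w' : ι} (huw : G.Adj u w) (huw' : G.Adj u w')
    (hne : w' ≠ w) : branch G w' u ⊂ branch G u w :=
  Set.ssubset_iff_subset_ne.mpr ⟨fun _ hx => (mem_branch_iff hacyc huw).mpr
      (Or.inr ⟨w', huw', hne, hx⟩),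
    fun h => notMem_branch_of_adj hacyc huw'.symm (h ▸ Reachable.refl u)⟩

end Branch

namespace BranchDec

variable (D : BranchDec E ι)

lemma side_eq_preimage (u w : ι) :
    D.side u w = (fun e => (D.b.symm e).1) ⁻¹' branch D.Y u w := by
  ext e
  constructor
  · rintro ⟨l, hl, rfl⟩
    rwa [Set.mem_preimage, Equiv.symm_apply_apply]
  · exact fun he => ⟨D.b.symm e, he, D.b.apply_symm_apply e⟩

lemma isCompl_side {u w : ι} (huw : D.Y.Adj u w) : IsCompl (D.side u w) (D.side w u) := by
  simp only [side_eq_preimage]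
  exact (isCompl_branch D.conn D.acyc huw).preimage _

lemma disjoint_side_of_adj {u w₁ w₂ : ι} (hw₁ : D.Y.Adj u w₁) (hw₂ : D.Y.Adj u w₂)
    (hne : w₁ ≠ w₂) : Disjoint (D.side w₁ u) (D.side w₂ u) := by
  simp only [side_eq_preimage]
  exact ((isCompl_branch D.conn D.acyc hw₁).disjoint.symm.mono_right
    (branch_ssubset D.acyc hw₁ hw₂ hne.symm).subset).preimage _

lemma side_of_leaf {u w : ι} (huw : D.Y.Adj u w) (hu : (D.Y.neighborSet u).ncard = 1) :
    D.side u w = {D.b ⟨u, hu⟩} := by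
  obtain ⟨a, ha⟩ := Set.ncard_eq_one.mp hu
  have hN : ∀ w', D.Y.Adj u w' → w' = a := fun w' h => (ha ▸ h : w' ∈ ({a} : Set ι))
  ext e
  rw [side_eq_preimage, Set.mem_preimage, mem_branch_iff D.acyc huw, Set.mem_singleton_iff,
    ← Equiv.symm_apply_eq, Subtype.ext_iff]
  exact or_iff_left fun ⟨w', huw', hne, _⟩ => hne ((hN w' huw').trans (hN w huw).symm)

lemma side_eq_biUnion {u w : ι} (huw : D.Y.Adj u w) (hu : (D.Y.neighborSet u).ncard ≠ 1) :
    D.side u w = ⋃ w' ∈ D.Y.neighborSet u \ {w}, D.side w' u := by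
  ext e
  have hne : (D.b.symm e).1 ≠ u := fun h => hu (h ▸ (D.b.symm e).2)
  simp only [side_eq_preimage, Set.mem_preimage, mem_branch_iff D.acyc huw, hne, false_or,
    Set.mem_iUnion, Set.mem_sdiff, Set.mem_singleton_iff, mem_neighborSet, exists_prop, and_assoc]

lemma ncard_boundary_side_le_bwidth [Finite ι] (ends : E → Set V) {u w : ι}
    (huw : D.Y.Adj u w) : (boundary ends (D.side u w)).ncard ≤ D.bwidth ends := by
  rw [boundary, (D.isCompl_side huw).compl_eq]
  exact le_ciSup (f := fun p : {p : ι × ι // D.Y.Adj p.1 p.2} => D.order ends p.1.1 p.1.2)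
    (Set.finite_range _).bddAbove ⟨(u, w), huw⟩

theorem decomposable_side [Finite V] [Finite ι] (ends : E → Set V) (X : Set V) {u w : ι}
    (huw : D.Y.Adj u w) : Decomposable ends X (D.bwidth ends) (D.side u w) := by
  induction hn : (branch D.Y u w).ncard using Nat.strong_induction_on generalizing u w with
  | _ n ih =>
  have ih' : ∀ w' ∈ D.Y.neighborSet u \ {w}, Decomposable ends X (D.bwidth ends) (D.side w' u) :=
    fun w' hw' => ih _ (hn ▸ Set.ncard_lt_ncard (branch_ssubset D.acyc huw hw'.1 hw'.2))
      hw'.1.symm rfl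
  have hbd := D.ncard_boundary_side_le_bwidth ends huw
  have hdeg := Set.ncard_sdiff_singleton_add_one (show w ∈ D.Y.neighborSet u from huw)
  have hcubic := D.subcubic u
  obtain hleaf | hchain | hfork : (D.Y.neighborSet u \ {w}).ncard = 0 ∨
      (D.Y.neighborSet u \ {w}).ncard = 1 ∨ (D.Y.neighborSet u \ {w}).ncard = 2 := by omega
  · rw [D.side_of_leaf huw (by omega)] at hbd ⊢
    exact decomposable_singleton hbd
  · obtain ⟨w₁, hN⟩ := Set.ncard_eq_one.mp hchain
    rw [D.side_eq_biUnion huw (by omega), hN, Set.biUnion_singleton]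
    exact ih' w₁ (hN ▸ rfl)
  · obtain ⟨w₁, w₂, hne, hN⟩ := Set.ncard_eq_two.mp hfork
    have hw₁ : w₁ ∈ D.Y.neighborSet u \ {w} := hN ▸ Or.inl rfl
    have hw₂ : w₂ ∈ D.Y.neighborSet u \ {w} := hN ▸ Or.inr rfl
    rw [D.side_eq_biUnion huw (by omega), hN, Set.biUnion_insert, Set.biUnion_singleton] at hbd ⊢
    exact (ih' w₁ hw₁).union (ih' w₂ hw₂) (D.disjoint_side_of_adj hw₁.1 hw₂.1 hne) hbd

end BranchDec

end Proof

theorem stmt6_general {V E : Type} [Finite V]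
    (ends : E → Set V)
    (ι : Type) [Fintype ι] (D : BranchDec E ι) (X : Set V) :
    ∃ T : BT V E, IsRBD ends Set.univ Set.univ X T ∧
      T.width ≤ D.bwidth ends + X.ncard := by
  suffices h : Decomposable ends X (D.bwidth ends) Set.univ from
    h Set.univ X (Set.subset_univ _) Set.subset_union_right
  rcases isEmpty_or_nonempty E with hE | ⟨⟨e⟩⟩
  · rw [Set.univ_eq_empty_iff.mpr hE]
    exact decomposable_empty
  obtain ⟨u, w, huw⟩ : ∃ u w, D.Y.Adj u w :=
    ⟨_, Set.nonempty_of_ncard_ne_zero (ne_of_eq_of_ne (D.b.symm e).2 one_ne_zero)⟩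
  have hcover : D.side u w ∪ D.side w u = Set.univ := (D.isCompl_side huw).sup_eq_top
  rw [← hcover]
  refine (D.decomposable_side ends X huw).union (D.decomposable_side ends X huw.symm)
    (D.isCompl_side huw).disjoint ?_
  simp [hcover, boundary_univ]

/-- Every branch decomposition `(Y,b)` of `G` yields a recursive branch
decomposition of `(G,X)` of width at most `width(Y,b) + |X|`. -/
theorem stmt6 {V E : Type} [Finite V] [Finite E]
    (ends : E → Set V) (hsmall : EndsSmall ends)
    (ι : Type) [Fintype ι] (D : BranchDec E ι) (X : Set V) :
    ∃ T : BT V E, IsRBD ends Set.univ Set.univ X T ∧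
      T.width ≤ D.bwidth ends + X.ncard :=
  stmt6_general ends ι D X

end MWidth
end

section
/- Let Γ = (G,X) and Δ = (H,Y) be graphs with sources, T a recursive tree decomposition of Γ, and α: G → H a surjective graph homomorphism (surjective on vertices and edges) such that α(X) = Y and whenever α identifies two vertices v ≠ w, there is a subtree T' of T whose root label contains both v and w. Then there is a recursive tree decomposition of Δ of width at most width(T). -/
open CategoryTheory MonoidalCategory

namespace MWidth

/-! The image of a recursive tree decomposition is obtained by mapping every bag through `α`.
Because `α` only identifies vertices that share a bag, this hypothesis passes to the children, and
`α` commutes with the intersections `Vᵢ ∩ V'` and `V₁ ∩ V₂` that define the sources and the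
separation. Mapping a bag does not increase its size, so the width does not grow. -/

section Transport

variable {V E W F : Type}

lemma image_inter_subset_image_of {f : V → W} {A B C : Set V}
    (h : ∀ v ∈ A, ∀ w ∈ B, f v = f w → v ∈ C ∨ w ∈ C) : f '' A ∩ f '' B ⊆ f '' C := by
  rintro _ ⟨⟨v, hv, rfl⟩, w, hw, hwv⟩
  rcases h v hv w hw hwv.symm with hvC | hwC
  · exact ⟨v, hvC, rfl⟩
  · exact ⟨w, hwC, hwv⟩

namespace RTree

def map (f : V → W) : RTree V → RTree W
  | nil => nil
  | node T1 L T2 => node (T1.map f) (f '' L) (T2.map f)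

lemma width_map_le [Finite V] (f : V → W) : ∀ T : RTree V, (T.map f).width ≤ T.width
  | nil => le_rfl
  | node T1 L T2 => max_le_max (Set.ncard_image_le L.toFinite)
      (max_le_max (width_map_le f T1) (width_map_le f T2))

def SharesBag (T : RTree V) (v w : V) : Prop :=
  ∃ T', Subtree T' T ∧ v ∈ T'.label ∧ w ∈ T'.label

lemma sharesBag_node {T1 T2 : RTree V} {L : Set V} {v w : V} :
    (node T1 L T2).SharesBag v w ↔ (v ∈ L ∧ w ∈ L) ∨ T1.SharesBag v w ∨ T2.SharesBag v w := by
  constructor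
  · rintro ⟨T', hT', hv, hw⟩
    cases hT' with
    | refl => exact Or.inl ⟨hv, hw⟩
    | left h => exact Or.inr (Or.inl ⟨T', h, hv, hw⟩)
    | right h => exact Or.inr (Or.inr ⟨T', h, hv, hw⟩)
  · rintro (⟨hv, hw⟩ | ⟨T', hT', hv, hw⟩ | ⟨T', hT', hv, hw⟩)
    · exact ⟨_, .refl _, hv, hw⟩
    · exact ⟨T', .left hT', hv, hw⟩
    · exact ⟨T', .right hT', hv, hw⟩

def IdentifiesWithinBags (f : V → W) (vs : Set V) (T : RTree V) : Prop :=
  ∀ v ∈ vs, ∀ w ∈ vs, v ≠ w → f v = f w → T.SharesBag v w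

lemma IdentifiesWithinBags.node_comm {f : V → W} {vs L : Set V} {T1 T2 : RTree V}
    (hid : (node T1 L T2).IdentifiesWithinBags f vs) : (node T2 L T1).IdentifiesWithinBags f vs :=
  fun v hv w hw hvw he =>
    sharesBag_node.mpr ((sharesBag_node.mp (hid v hv w hw hvw he)).imp_right Or.symm)

end RTree

namespace IsRTD

variable {ends : E → Set V} {vs : Set V} {es : Set E} {X : Set V} {T : RTree V} {v w : V}

lemma inter_subset_label (h : IsRTD ends vs es X T) : vs ∩ X ⊆ T.label := by
  cases T with
  | nil => simp [h.1]
  | node => exact Set.inter_subset_right.trans h.2.2.1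

lemma label_subset_of_subtree {T' : RTree V} (h : IsRTD ends vs es X T) (hT' : T'.Subtree T) :
    T'.label ⊆ vs := by
  induction hT' generalizing vs es X with
  | refl =>
    cases T' with
    | nil => exact Set.empty_subset _
    | node => exact h.2.1
  | left _ ih =>
    obtain ⟨-, -, -, _, _, _, _, h1, -, -, -, -, -, -, -, -, -, hT1, -⟩ := h
    exact (ih hT1).trans h1
  | right _ ih =>
    obtain ⟨-, -, -, _, _, _, _, -, h2, -, -, -, -, -, -, -, -, -, hT2⟩ := h
    exact (ih hT2).trans h2

lemma mem_of_sharesBag (h : IsRTD ends vs es X T) (hvw : T.SharesBag v w) : v ∈ vs ∧ w ∈ vs :=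
  let ⟨_, hT', hv, hw⟩ := hvw
  ⟨h.label_subset_of_subtree hT' hv, h.label_subset_of_subtree hT' hw⟩

lemma of_edges_subset {es' : Set E} (h : IsRTD ends vs es X T) (hes : es' ⊆ es) :
    IsRTD ends vs es' X T := by
  induction T generalizing vs es es' X with
  | nil => exact ⟨h.1, Set.subset_empty_iff.mp (h.2 ▸ hes)⟩
  | node T1 L T2 ih1 ih2 =>
    obtain ⟨hne, hLvs, hXL, vs1, vs2, es1, es2, h1, h2, -, -, hends1, hends2,
      hunion, hdisj, hsep, hrest, hT1, hT2⟩ := h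
    refine ⟨hne, hLvs, hXL, vs1, vs2, es1 ∩ es', es2 ∩ es', h1, h2,
      Set.inter_subset_right, Set.inter_subset_right,
      fun e he => hends1 e he.1, fun e he => hends2 e he.1, hunion, ?_, hsep, ?_,
      ih1 hT1 Set.inter_subset_left, ih2 hT2 Set.inter_subset_left⟩
    · exact Set.subset_empty_iff.mp (hdisj ▸ Set.inter_subset_inter
        Set.inter_subset_left Set.inter_subset_left)
    · rintro e ⟨he, he12⟩
      exact hrest e ⟨hes he, fun he12' => he12 (he12'.imp (⟨·, he⟩) (⟨·, he⟩))⟩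

/-! In the next lemmas `Tc` is one child of a node with root bag `L`, and `To` the other. -/

variable {L vsc vso Xo : Set V} {esc eso : Set E} {Tc To : RTree V} {f : V → W}

lemma mem_sep_or_mem_child (hc : IsRTD ends vsc esc (vsc ∩ L) Tc) (ho : IsRTD ends vso eso Xo To)
    (hsep : vsc ∩ vso ⊆ L) (hid : (RTree.node Tc L To).IdentifiesWithinBags f (L ∪ vsc ∪ vso))
    (hv : v ∈ vsc) (hw : w ∈ L ∪ vsc ∪ vso) (he : f v = f w) : v ∈ L ∨ w ∈ vsc := by
  by_cases hvw : v = w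
  · exact Or.inr (hvw ▸ hv)
  rcases RTree.sharesBag_node.mp (hid v (Or.inl (Or.inr hv)) w hw hvw he) with
    ⟨hvL, -⟩ | hbag | hbag
  · exact Or.inl hvL
  · exact Or.inr (hc.mem_of_sharesBag hbag).2
  · exact Or.inl (hsep ⟨hv, (ho.mem_of_sharesBag hbag).1⟩)

lemma image_inter_sep (hc : IsRTD ends vsc esc (vsc ∩ L) Tc) (ho : IsRTD ends vso eso Xo To)
    (hsep : vsc ∩ vso ⊆ L) (hid : (RTree.node Tc L To).IdentifiesWithinBags f (L ∪ vsc ∪ vso)) :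
    f '' (vsc ∩ L) = f '' vsc ∩ f '' L :=
  (Set.image_inter_subset _ _ _).antisymm <| image_inter_subset_image_of fun _ hv _ hw he =>
    (hc.mem_sep_or_mem_child ho hsep hid hv (Or.inl (Or.inl hw)) he).imp (⟨hv, ·⟩) (⟨·, hw⟩)

lemma image_inter_image_subset_image_sep (hc : IsRTD ends vsc esc (vsc ∩ L) Tc)
    (ho : IsRTD ends vso eso Xo To) (hsep : vsc ∩ vso ⊆ L)
    (hid : (RTree.node Tc L To).IdentifiesWithinBags f (L ∪ vsc ∪ vso)) :
    f '' vsc ∩ f '' vso ⊆ f '' L :=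
  image_inter_subset_image_of fun _ hv _ hw he =>
    (hc.mem_sep_or_mem_child ho hsep hid hv (Or.inr hw) he).imp_right (hsep ⟨·, hw⟩)

lemma identifiesWithinBags_child (hc : IsRTD ends vsc esc (vsc ∩ L) Tc)
    (ho : IsRTD ends vso eso Xo To) (hsep : vsc ∩ vso ⊆ L)
    (hid : (RTree.node Tc L To).IdentifiesWithinBags f (L ∪ vsc ∪ vso)) :
    Tc.IdentifiesWithinBags f vsc := by
  intro v hv w hw hvw he
  have hroot : v ∈ L → w ∈ L → Tc.SharesBag v w := fun hvL hwL =>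
    ⟨Tc, .refl Tc, hc.inter_subset_label ⟨hv, hv, hvL⟩, hc.inter_subset_label ⟨hw, hw, hwL⟩⟩
  rcases RTree.sharesBag_node.mp (hid v (Or.inl (Or.inr hv)) w (Or.inl (Or.inr hw)) hvw he) with
    ⟨hvL, hwL⟩ | hbag | hbag
  · exact hroot hvL hwL
  · exact hbag
  · obtain ⟨hvo, hwo⟩ := ho.mem_of_sharesBag hbag
    exact hroot (hsep ⟨hv, hvo⟩) (hsep ⟨hw, hwo⟩)

end IsRTD

theorem IsRTD.map {endsG : E → Set V} {endsH : F → Set W} {αV : V → W} {αE : E → F}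
    (hcomm : ∀ e, endsH (αE e) = αV '' endsG e) {T : RTree V} {vs : Set V} {es : Set E}
    {X : Set V} (h : IsRTD endsG vs es X T) (hid : T.IdentifiesWithinBags αV vs) :
    IsRTD endsH (αV '' vs) (αE '' es) (αV '' X) (T.map αV) := by
  induction T generalizing vs es X with
  | nil => exact ⟨by rw [h.1, Set.image_empty], by rw [h.2, Set.image_empty]⟩
  | node T1 L T2 ih1 ih2 =>
    obtain ⟨hne, hLvs, hXL, vs1, vs2, es1, es2, h1, h2, he1, he2, hends1, hends2,
      rfl, hdisj, hsep, hrest, hT1, hT2⟩ := h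
    have hsep' : vs2 ∩ vs1 ⊆ L := Set.inter_comm vs2 vs1 ▸ hsep
    have hid' : (RTree.node T2 L T1).IdentifiesWithinBags αV (L ∪ vs2 ∪ vs1) :=
      Set.union_right_comm L vs1 vs2 ▸ hid.node_comm
    -- edges of `H` hit by both sides are kept on the first side only
    refine ⟨hne.image αV, Set.image_mono hLvs, Set.image_mono hXL,
      αV '' vs1, αV '' vs2, αE '' es1, αE '' es2 \ αE '' es1,
      Set.image_mono h1, Set.image_mono h2, Set.image_mono he1,
      Set.sdiff_subset.trans (Set.image_mono he2), ?_, ?_, by rw [Set.image_union, Set.image_union],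
      Set.inter_sdiff_self _ _, hT1.image_inter_image_subset_image_sep hT2 hsep hid, ?_,
      hT1.image_inter_sep hT2 hsep hid ▸ ih1 hT1 (hT1.identifiesWithinBags_child hT2 hsep hid),
      hT2.image_inter_sep hT1 hsep' hid' ▸
        (ih2 hT2 (hT2.identifiesWithinBags_child hT1 hsep' hid')).of_edges_subset Set.sdiff_subset⟩
    · rintro _ ⟨e, he, rfl⟩
      exact hcomm e ▸ Set.image_mono (hends1 e he)
    · rintro _ ⟨⟨e, he, rfl⟩, -⟩
      exact hcomm e ▸ Set.image_mono (hends2 e he)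
    · rintro _ ⟨⟨e, he, rfl⟩, hnot⟩
      have he1 : e ∉ es1 := fun he1 => hnot (Or.inl ⟨e, he1, rfl⟩)
      have he2 : e ∉ es2 := fun he2 => hnot (Or.inr ⟨⟨e, he2, rfl⟩, fun hin => hnot (Or.inl hin)⟩)
      exact hcomm e ▸ Set.image_mono (hrest e ⟨he, fun h12 => h12.elim he1 he2⟩)

end Transport

theorem stmt12_general {V E W F : Type} [Finite V]
    (endsG : E → Set V)
    (endsH : F → Set W)
    (X : Set V) (Y : Set W)
    (αV : V → W) (αE : E → F)
    (hsurjV : Function.Surjective αV) (hsurjE : Function.Surjective αE)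
    (hcomm : ∀ e, endsH (αE e) = αV '' endsG e)
    (hX : αV '' X = Y)
    (T : RTree V) (hT : IsRTD endsG Set.univ Set.univ X T)
    (hident : ∀ v w : V, v ≠ w → αV v = αV w →
      ∃ T' : RTree V, RTree.Subtree T' T ∧ v ∈ T'.label ∧ w ∈ T'.label) :
    ∃ T' : RTree W, IsRTD endsH Set.univ Set.univ Y T' ∧ T'.width ≤ T.width := by
  refine ⟨T.map αV, ?_, T.width_map_le αV⟩
  have hmap := hT.map hcomm fun v _ w _ => hident v w
  rwa [Set.image_univ, hsurjV.range_eq, Set.image_univ, hsurjE.range_eq, hX] at hmap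

/-- A surjective graph homomorphism respecting the structure of a
recursive tree decomposition transports it, without increasing the width. -/
theorem stmt12 {V E W F : Type} [Finite V] [Finite E] [Finite W] [Finite F]
    (endsG : E → Set V) (hsG : EndsSmall endsG)
    (endsH : F → Set W) (hsH : EndsSmall endsH)
    (X : Set V) (Y : Set W)
    (αV : V → W) (αE : E → F)
    (hsurjV : Function.Surjective αV) (hsurjE : Function.Surjective αE)
    (hcomm : ∀ e, endsH (αE e) = αV '' endsG e)
    (hX : αV '' X = Y)
    (T : RTree V) (hT : IsRTD endsG Set.univ Set.univ X T)
    (hident : ∀ v w : V, v ≠ w → αV v = αV w →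
      ∃ T' : RTree V, RTree.Subtree T' T ∧ v ∈ T'.label ∧ w ∈ T'.label) :
    ∃ T' : RTree W, IsRTD endsH Set.univ Set.univ Y T' ∧ T'.width ≤ T.width :=
  stmt12_general endsG endsH X Y αV αE hsurjV hsurjE hcomm hX T hT hident

end MWidth
end

section
/- Let Γ=(G,X) be a graph with sources and T a recursive path decomposition of Γ. Then the cospan g = X ↪ G ← ∅ has a monoidal path decomposition of width exactly width(T). -/
open CategoryTheory MonoidalCategory

namespace MWidth

section


/-! ## Undirected graphs as a category -/

structure UGr : Type 1 where
  V : Type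
  E : Type
  ends : E → Set V
  small : ∀ e, ∃ u w : V, ends e = {u, w}

@[ext]
structure UGrHom (G H : UGr) where
  onV : G.V → H.V
  onE : G.E → H.E
  comm : ∀ e, H.ends (onE e) = onV '' G.ends e

instance : Category UGr where
  Hom := UGrHom
  id G := ⟨id, id, fun e => (Set.image_id _).symm⟩
  comp f g := ⟨g.onV ∘ f.onV, g.onE ∘ f.onE, fun e => by
    simp only [Function.comp_apply, g.comm, f.comm, Set.image_image]⟩
  id_comp f := by cases f; rfl
  comp_id f := by cases f; rfl
  assoc f g h := rfl

/-- the vertex functor -/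
def vertF : UGr ⥤ Type where
  obj G := G.V
  map f := TypeCat.ofHom f.onV
  map_id _ := rfl
  map_comp _ _ := rfl

/-- the edge functor -/
def edgeF : UGr ⥤ Type where
  obj G := G.E
  map f := TypeCat.ofHom f.onE
  map_id _ := rfl
  map_comp _ _ := rfl

/-! ## Cospans of graphs with discrete feet -/

structure Csp (X Y : Type) : Type 1 where
  G : UGr
  l : X → G.V
  r : Y → G.V

/-- glueing relation for the pushout -/
def glueR {X Y Z : Type} (c1 : Csp X Y) (c2 : Csp Y Z) :
    (c1.G.V ⊕ c2.G.V) → (c1.G.V ⊕ c2.G.V) → Prop :=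
  fun a b => ∃ y : Y, a = Sum.inl (c1.r y) ∧ b = Sum.inr (c2.l y)

/-- composition of cospans by pushout -/
def Csp.comp {X Y Z : Type} (c1 : Csp X Y) (c2 : Csp Y Z) : Csp X Z where
  G :=
    { V := Quot (glueR c1 c2)
      E := c1.G.E ⊕ c2.G.E
      ends := fun e =>
        Sum.rec (fun e1 => (fun v => Quot.mk _ (Sum.inl v)) '' c1.G.ends e1)
          (fun e2 => (fun v => Quot.mk _ (Sum.inr v)) '' c2.G.ends e2) e
      small := by
        rintro (e1 | e2)
        · obtain ⟨u, w, h⟩ := c1.G.small e1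
          exact ⟨Quot.mk _ (Sum.inl u), Quot.mk _ (Sum.inl w), by
            show (fun v => Quot.mk _ (Sum.inl v)) '' c1.G.ends e1 = _
            rw [h, Set.image_pair]⟩
        · obtain ⟨u, w, h⟩ := c2.G.small e2
          exact ⟨Quot.mk _ (Sum.inr u), Quot.mk _ (Sum.inr w), by
            show (fun v => Quot.mk _ (Sum.inr v)) '' c2.G.ends e2 = _
            rw [h, Set.image_pair]⟩ }
  l := fun x => Quot.mk _ (Sum.inl (c1.l x))
  r := fun z => Quot.mk _ (Sum.inr (c2.r z))

/-- monoidal product of cospans: disjoint union -/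
def Csp.tens {X1 Y1 X2 Y2 : Type} (c1 : Csp X1 Y1) (c2 : Csp X2 Y2) :
    Csp (X1 ⊕ X2) (Y1 ⊕ Y2) where
  G :=
    { V := c1.G.V ⊕ c2.G.V
      E := c1.G.E ⊕ c2.G.E
      ends := fun e =>
        Sum.rec (fun e1 => Sum.inl '' c1.G.ends e1) (fun e2 => Sum.inr '' c2.G.ends e2) e
      small := by
        rintro (e1 | e2)
        · obtain ⟨u, w, h⟩ := c1.G.small e1
          exact ⟨Sum.inl u, Sum.inl w, by show Sum.inl '' c1.G.ends e1 = _; rw [h, Set.image_pair]⟩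
        · obtain ⟨u, w, h⟩ := c2.G.small e2
          exact ⟨Sum.inr u, Sum.inr w, by show Sum.inr '' c2.G.ends e2 = _; rw [h, Set.image_pair]⟩ }
  l := Sum.rec (fun x => Sum.inl (c1.l x)) (fun x => Sum.inr (c2.l x))
  r := Sum.rec (fun y => Sum.inl (c1.r y)) (fun y => Sum.inr (c2.r y))

/-- isomorphism of cospans (equality of morphisms in `Cospan_D(UGraph)`) -/
structure CspIso {X Y : Type} (c d : Csp X Y) where
  eV : c.G.V ≃ d.G.V
  eE : c.G.E ≃ d.G.E
  comm : ∀ e, d.G.ends (eE e) = eV '' c.G.ends e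
  lcomm : ∀ x, eV (c.l x) = d.l x
  rcomm : ∀ y, eV (c.r y) = d.r y

/-! ### monoidal decompositions of cospans -/

/-- monoidal decompositions: all morphisms are atomic -/
inductive CD : Type → Type → Type 2
  | atom {X Y : Type} (c : Csp X Y) : CD X Y
  | seq {X Z : Type} (M : Type) (d1 : CD X M) (d2 : CD M Z) : CD X Z
  | tens {X1 Y1 X2 Y2 : Type} (d1 : CD X1 Y1) (d2 : CD X2 Y2) : CD (X1 ⊕ X2) (Y1 ⊕ Y2)

def CD.eval : ∀ {X Y : Type}, CD X Y → Csp X Y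
  | _, _, .atom c => c
  | _, _, .seq _ d1 d2 => d1.eval.comp d2.eval
  | _, _, .tens d1 d2 => d1.eval.tens d2.eval

noncomputable def CD.width : ∀ {X Y : Type}, CD X Y → ℕ
  | _, _, .atom c => Nat.card c.G.V
  | _, _, .seq M d1 d2 => max (Nat.card M) (max d1.width d2.width)
  | _, _, .tens d1 d2 => max d1.width d2.width

/-- monoidal (right) tree decompositions: sequential composition only with an
atomic left factor -/
inductive CTD : Type → Type → Type 2
  | atom {X Y : Type} (c : Csp X Y) : CTD X Y
  | tens {X1 Y1 X2 Y2 : Type} (d1 : CTD X1 Y1) (d2 : CTD X2 Y2) : CTD (X1 ⊕ X2) (Y1 ⊕ Y2)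
  | seqA {X Z : Type} (M : Type) (c : Csp X M) (d : CTD M Z) : CTD X Z

def CTD.eval : ∀ {X Y : Type}, CTD X Y → Csp X Y
  | _, _, .atom c => c
  | _, _, .tens d1 d2 => d1.eval.tens d2.eval
  | _, _, .seqA _ c d => c.comp d.eval

noncomputable def CTD.width : ∀ {X Y : Type}, CTD X Y → ℕ
  | _, _, .atom c => Nat.card c.G.V
  | _, _, .tens d1 d2 => max d1.width d2.width
  | _, _, .seqA M c d => max (Nat.card c.G.V) (max (Nat.card M) d.width)

/-- monoidal path decompositions: only sequential composition -/
inductive CPD : Type → Type → Type 2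
  | atom {X Y : Type} (c : Csp X Y) : CPD X Y
  | seq {X Z : Type} (M : Type) (d1 : CPD X M) (d2 : CPD M Z) : CPD X Z

def CPD.eval : ∀ {X Y : Type}, CPD X Y → Csp X Y
  | _, _, .atom c => c
  | _, _, .seq _ d1 d2 => d1.eval.comp d2.eval

noncomputable def CPD.width : ∀ {X Y : Type}, CPD X Y → ℕ
  | _, _, .atom c => Nat.card c.G.V
  | _, _, .seq M d1 d2 => max (Nat.card M) (max d1.width d2.width)

/-! ### monoidal widths of cospans -/

noncomputable def cmwd {X Y : Type} (c : Csp X Y) : ℕ :=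
  sInf { n | ∃ d : CD X Y, Nonempty (CspIso d.eval c) ∧ d.width = n }

noncomputable def ctwd {X Y : Type} (c : Csp X Y) : ℕ :=
  sInf { n | ∃ d : CTD X Y, Nonempty (CspIso d.eval c) ∧ d.width = n }

noncomputable def cpwd {X Y : Type} (c : Csp X Y) : ℕ :=
  sInf { n | ∃ d : CPD X Y, Nonempty (CspIso d.eval c) ∧ d.width = n }

/-! ### cospans associated to graphs with sources -/

def grOf {V E : Type} (ends : E → Set V) (hs : ∀ e, ∃ u w : V, ends e = {u, w}) : UGr :=
  ⟨V, E, ends, hs⟩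

/-- the cospan `X ↪ G ← ∅` associated to a graph with sources `(G, X)` -/
def srcCsp {V E : Type} (ends : E → Set V) (hs : ∀ e, ∃ u w : V, ends e = {u, w})
    (X : Set V) : Csp ↥X Empty :=
  ⟨grOf ends hs, fun x => x.1, Empty.elim⟩

/-- the cospan `∅ → G ← ∅` associated to a graph `G` -/
def closedCsp {V E : Type} (ends : E → Set V) (hs : ∀ e, ∃ u w : V, ends e = {u, w}) :
    Csp Empty Empty :=
  ⟨grOf ends hs, Empty.elim, Empty.elim⟩

end

/-! Peel off the first bag `V₁` of the recursive path decomposition: the graph with sources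
`(G, X)` is the subgraph on `V₁` carrying the edges outside the remainder `(G', V₁ ∩ V')`,
glued to that remainder along `V₁ ∩ V'`. For cospans this gluing is the pushout, so
`X → G ← ∅` is the composite of the atom `X → G[V₁] ← V₁ ∩ V'` with a decomposition of the
remainder, and the new cut `V₁ ∩ V'` is no larger than the atom `V₁`: the widths agree. -/

namespace CspIso

variable {X Y Z : Type}

def refl (c : Csp X Y) : CspIso c c :=
  ⟨Equiv.refl _, Equiv.refl _, fun _ => (Set.image_id _).symm, fun _ => rfl, fun _ => rfl⟩

def trans {a b c : Csp X Y} (i : CspIso a b) (j : CspIso b c) : CspIso a c where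
  eV := i.eV.trans j.eV
  eE := i.eE.trans j.eE
  comm e := by simp only [Equiv.trans_apply, j.comm, i.comm, Set.image_image]; rfl
  lcomm x := by simp only [Equiv.trans_apply, i.lcomm, j.lcomm]
  rcomm y := by simp only [Equiv.trans_apply, i.rcomm, j.rcomm]

def compRight (c : Csp X Y) {d d' : Csp Y Z} (i : CspIso d d') :
    CspIso (c.comp d) (c.comp d') where
  eV := Quot.congr ((Equiv.refl _).sumCongr i.eV) (by
    rintro (a | a) (b | b) <;> simp [glueR, ← i.lcomm])
  eE := (Equiv.refl _).sumCongr i.eE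
  comm := by
    rintro (e | e) <;> ext v
    · exact ⟨fun ⟨w, hw, h⟩ => ⟨_, ⟨w, hw, rfl⟩, h⟩, fun ⟨_, ⟨w, hw, rfl⟩, h⟩ => ⟨w, hw, h⟩⟩
    · show v ∈ (fun v => Quot.mk (glueR c d') (Sum.inr v)) '' d'.G.ends (i.eE e) ↔ _
      rw [i.comm]
      exact ⟨fun ⟨_, ⟨w, hw, rfl⟩, h⟩ => ⟨_, ⟨w, hw, rfl⟩, h⟩,
        fun ⟨_, ⟨w, hw, rfl⟩, h⟩ => ⟨_, ⟨w, hw, rfl⟩, h⟩⟩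
  lcomm _ := rfl
  rcomm z := congrArg (fun v => Quot.mk _ (Sum.inr v)) (i.rcomm z)

end CspIso

namespace UGr

variable (G : UGr)

def subgraph (vs : Set G.V) (es : Set G.E) (he : ∀ e ∈ es, G.ends e ⊆ vs) : UGr where
  V := vs
  E := es
  ends e := Subtype.val ⁻¹' G.ends e
  small := by
    rintro ⟨e, hes⟩
    obtain ⟨u, w, huw⟩ := G.small e
    have hu : u ∈ vs := he e hes (by simp [huw])
    have hw : w ∈ vs := he e hes (by simp [huw])
    exact ⟨⟨u, hu⟩, ⟨w, hw⟩, by ext; simp [huw, Subtype.ext_iff]⟩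

def subCsp (vs : Set G.V) (es : Set G.E) (he : ∀ e ∈ es, G.ends e ⊆ vs) {A B : Type}
    (l : A → G.V) (r : B → G.V) (hl : ∀ a, l a ∈ vs) (hr : ∀ b, r b ∈ vs) : Csp A B :=
  ⟨G.subgraph vs es he, fun a => ⟨l a, hl a⟩, fun b => ⟨r b, hr b⟩⟩

variable {G} {A B : Type} {l : A → G.V} {r : B → G.V}

def subCspUnivIso (he : ∀ e ∈ (Set.univ : Set G.E), G.ends e ⊆ Set.univ)
    (hl : ∀ a, l a ∈ Set.univ) (hr : ∀ b, r b ∈ Set.univ) :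
    CspIso (G.subCsp Set.univ Set.univ he l r hl hr) ⟨G, l, r⟩ where
  eV := Equiv.Set.univ G.V
  eE := Equiv.Set.univ G.E
  comm _ := Set.ext fun v => ⟨fun h => ⟨⟨v, trivial⟩, h, rfl⟩, fun ⟨_, hw, hv⟩ => hv ▸ hw⟩
  lcomm _ := rfl
  rcomm _ := rfl

noncomputable def subCspCompIso {vs₁ vs₂ vs : Set G.V} {es₁ es₂ es : Set G.E}
    (he₁ : ∀ e ∈ es₁, G.ends e ⊆ vs₁) (he₂ : ∀ e ∈ es₂, G.ends e ⊆ vs₂)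
    (he : ∀ e ∈ es, G.ends e ⊆ vs) (hvs : vs₁ ∪ vs₂ = vs) (hes : es₁ ∪ es₂ = es)
    (hdisj : Disjoint es₁ es₂) (hl : ∀ a, l a ∈ vs₁) (hr : ∀ b, r b ∈ vs₂) :
    CspIso ((G.subCsp vs₁ es₁ he₁ l Subtype.val hl fun y : ↥(vs₁ ∩ vs₂) => y.2.1).comp
        (G.subCsp vs₂ es₂ he₂ Subtype.val r (fun y : ↥(vs₁ ∩ vs₂) => y.2.2) hr))
      (G.subCsp vs es he l r (fun a => hvs ▸ Or.inl (hl a)) fun b => hvs ▸ Or.inr (hr b)) := by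
  classical
  subst hvs hes
  set c₁ := G.subCsp vs₁ es₁ he₁ l Subtype.val hl fun y : ↥(vs₁ ∩ vs₂) => y.2.1
  set c₂ := G.subCsp vs₂ es₂ he₂ Subtype.val r (fun y : ↥(vs₁ ∩ vs₂) => y.2.2) hr
  let f : Quot (glueR c₁ c₂) → ↥(vs₁ ∪ vs₂) :=
    Quot.lift (Sum.elim (Set.inclusion Set.subset_union_left)
      (Set.inclusion Set.subset_union_right)) (by rintro _ _ ⟨y, rfl, rfl⟩; rfl)
  have glue : ∀ (v : ↥vs₁) (w : ↥vs₂), (v : G.V) = w →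
      Quot.mk (glueR c₁ c₂) (.inl v) = Quot.mk _ (.inr w) := by
    rintro ⟨v, hv⟩ ⟨w, hw⟩ (rfl : v = w)
    exact Quot.sound ⟨⟨v, hv, hw⟩, rfl, rfl⟩
  have hinj : Function.Injective f := by
    refine Quot.ind fun a => Quot.ind fun b hab => ?_
    replace hab := congrArg Subtype.val hab
    rcases a with v | v <;> rcases b with w | w
    · exact congrArg (Quot.mk _ ∘ Sum.inl) (Subtype.ext hab)
    · exact glue v w hab
    · exact (glue w v hab.symm).symm
    · exact congrArg (Quot.mk _ ∘ Sum.inr) (Subtype.ext hab)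
  have hsurj : Function.Surjective f := by
    rintro ⟨v, hv | hv⟩
    · exact ⟨Quot.mk _ (.inl ⟨v, hv⟩), rfl⟩
    · exact ⟨Quot.mk _ (.inr ⟨v, hv⟩), rfl⟩
  refine ⟨Equiv.ofBijective f ⟨hinj, hsurj⟩, (Equiv.Set.union hdisj).symm, ?_,
    fun _ => rfl, fun _ => rfl⟩
  rintro (⟨e, he⟩ | ⟨e, he⟩) <;> ext ⟨v, hv⟩
  · refine ⟨fun h => ⟨_, ⟨⟨v, he₁ e he h⟩, h, rfl⟩, rfl⟩, ?_⟩
    rintro ⟨_, ⟨w, hw, rfl⟩, hwv⟩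
    obtain rfl : w.1 = v := congrArg Subtype.val hwv
    exact hw
  · refine ⟨fun h => ⟨_, ⟨⟨v, he₂ e he h⟩, h, rfl⟩, rfl⟩, ?_⟩
    rintro ⟨_, ⟨w, hw, rfl⟩, hwv⟩
    obtain rfl : w.1 = v := congrArg Subtype.val hwv
    exact hw

theorem exists_cpd_of_isRPD [Finite G.V] {L : List (Set G.V)} {vs : Set G.V} {es : Set G.E}
    {X : Set G.V} (he : ∀ e ∈ es, G.ends e ⊆ vs) (hX : X ⊆ vs) (hL : IsRPD G.ends vs es X L) :
    ∃ d : CPD ↥X Empty, Nonempty (CspIso d.eval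
        (G.subCsp vs es he Subtype.val Empty.elim (fun x => hX x.2) fun b => b.elim)) ∧
      d.width = pdWidth L := by
  induction L generalizing vs es X with
  | nil =>
    obtain ⟨rfl, rfl⟩ := hL
    exact ⟨.atom (G.subCsp ∅ ∅ he Subtype.val Empty.elim (fun x => hX x.2) fun b => b.elim),
      ⟨CspIso.refl _⟩, Nat.card_of_isEmpty (α := ↥(∅ : Set G.V))⟩
  | cons V₁ L ih =>
    obtain ⟨-, -, hXV₁, vs', es', -, hes', he', hvs, hout, hrec⟩ := hL
    obtain ⟨d, ⟨i⟩, hd⟩ := ih he' Set.inter_subset_right hrec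
    refine ⟨.seq ↥(V₁ ∩ vs') (.atom (G.subCsp V₁ (es \ es') hout Subtype.val Subtype.val
      (fun x => hXV₁ x.2) fun y => y.2.1)) d, ⟨?_⟩, ?_⟩
    · exact (CspIso.compRight _ i).trans (G.subCspCompIso hout he' he hvs
        (Set.sdiff_union_of_subset hes') Set.disjoint_sdiff_left _ _)
    · show max (Nat.card ↥(V₁ ∩ vs')) (max (Nat.card ↥V₁) d.width) = max V₁.ncard (pdWidth L)
      rw [hd, Nat.card_coe_set_eq, Nat.card_coe_set_eq]
      -- `ncard` of an infinite set is `0`, so an infinite `V₁` could otherwise weigh less than the cut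
      exact max_eq_right (le_max_of_le_left (Set.ncard_inter_le_ncard_left _ _))

end UGr

theorem stmt15_general {V E : Type} [Finite V]
    (ends : E → Set V) (hs : EndsSmall ends)
    (X : Set V) (T : List (Set V)) (hT : IsRPD ends Set.univ Set.univ X T) :
    ∃ d : CPD ↥X Empty, Nonempty (CspIso d.eval (srcCsp ends hs X)) ∧
      d.width = pdWidth T := by
  have : Finite (grOf ends hs).V := ‹Finite V›
  obtain ⟨d, ⟨i⟩, hd⟩ := (grOf ends hs).exists_cpd_of_isRPD
    (fun _ _ => Set.subset_univ _) (Set.subset_univ X) hT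
  exact ⟨d, ⟨i.trans (UGr.subCspUnivIso _ _ _)⟩, hd⟩

/-- A recursive path decomposition of `(G,X)` yields a monoidal path
decomposition of the cospan `X ↪ G ← ∅` of exactly the same width. -/
theorem stmt15 {V E : Type} [Finite V] [Finite E]
    (ends : E → Set V) (hs : EndsSmall ends)
    (X : Set V) (T : List (Set V)) (hT : IsRPD ends Set.univ Set.univ X T) :
    ∃ d : CPD ↥X Empty, Nonempty (CspIso d.eval (srcCsp ends hs X)) ∧
      d.width = pdWidth T :=
  stmt15_general ends hs X T hT

end MWidth
end
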